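/- arXiv:2402.07503 — 9 statements merged into one kernel-verified Lean document; each statement's English description precedes it below -/
import Mathlib

section
/- Let d ≥ 1. For each i = 1,…,d let q_i ≥ 0 and let ν_i be a nonnegative Borel measure on (0,∞) with ∫₀^∞ (v ∧ v²) ν_i(dv) < ∞, and define J_i(b) := (1/2) q_i b² + ∫₀^∞ (e^{−bv} − 1 + bv) ν_i(dv) for b ≥ 0. Assume each J_i is not identically zero and varies regularly at zero with some index α_i ∈ ℝ. Let G_1,…,G_d : [0,∞) → [0,∞) be continuous with G_i(0) = 0 for all i. Suppose there exist c ≥ 0 and a nonnegative Borel measure μ on (0,∞) with ∫₀^∞ (v ∧ v²) μ(dv) < ∞ such that, setting J̃(b) := c b² + ∫₀^∞ (e^{−bv} − 1 + bv) μ(dv), the identity Σ_{i=1}^d J_i(b·G_i(x)) = x·J̃(b) holds for all b ≥ 0 and all x ≥ 0, and suppose J̃ is not identically zero. Then there exist an integer g with 1 ≤ g ≤ d, reals η_1,…,η_g > 0 and pairwise distinct exponents β_1,…,β_g ∈ (1,2], each equal to one of the indices α_i, such that J̃(b) = Σ_{k=1}^g η_k b^{β_k} for all b ≥ 0. -/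
/-!
Normalising the identity at `b = 1`, the shares `J i (G i x) / x` of the summands lie in
`[0, J̃ 1]`. Along a sequence `x → 0` they converge to weights `w i`, and writing
`J̃ b = ∑ i, (J i (G i x) / x) * (J i (b * G i x) / J i (G i x))` with `G i x → 0`, regular
variation turns the ratios into `b ^ α i`, so `J̃ b = ∑ i, w i * b ^ α i`. Summands with `w i = 0`
disappear in the limit because the ratios are bounded by `max 1 (b ^ 2)`. A surviving exponent lies
in `(1, 2]` because `J̃ b = o(b)` at `0` and `J̃ b = O(b ^ 2)` at infinity; merging equal exponents
gives the claimed form.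
-/

open MeasureTheory Real Set Filter
open scoped Topology

noncomputable def levyKernel (t : ℝ) : ℝ := exp (-t) - 1 + t

lemma levyKernel_zero : levyKernel 0 = 0 := by simp [levyKernel]

lemma levyKernel_nonneg (t : ℝ) : 0 ≤ levyKernel t := by
  have := one_sub_le_exp_neg t
  unfold levyKernel; linarith

lemma levyKernel_le_self {t : ℝ} (ht : 0 ≤ t) : levyKernel t ≤ t := by
  have := exp_le_one_iff.2 (neg_nonpos.2 ht)
  unfold levyKernel; linarith

lemma continuous_levyKernel : Continuous levyKernel := by
  unfold levyKernel; fun_prop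

lemma hasDerivAt_levyKernel (t : ℝ) : HasDerivAt levyKernel (1 - exp (-t)) t := by
  have h := (((hasDerivAt_neg t).exp).sub_const 1).add (hasDerivAt_id t)
  rwa [show exp (-t) * -1 + 1 = 1 - exp (-t) by ring] at h

lemma monotoneOn_Ici_of_hasDerivAt_nonneg {f f' : ℝ → ℝ} {a : ℝ}
    (hf : ∀ t, HasDerivAt f (f' t) t) (hf' : ∀ t, a ≤ t → 0 ≤ f' t) :
    MonotoneOn f (Ici a) :=
  monotoneOn_of_hasDerivWithinAt_nonneg (convex_Ici a)
    (fun t _ => (hf t).continuousAt.continuousWithinAt) (fun t _ => (hf t).hasDerivWithinAt)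
    (fun t ht => hf' t (interior_subset ht))

lemma levyKernel_monotoneOn : MonotoneOn levyKernel (Ici 0) :=
  monotoneOn_Ici_of_hasDerivAt_nonneg hasDerivAt_levyKernel fun _ ht =>
    sub_nonneg.2 (exp_le_one_iff.2 (neg_nonpos.2 ht))

lemma levyKernel_le_sq_div_two {t : ℝ} (ht : 0 ≤ t) : levyKernel t ≤ t ^ 2 / 2 := by
  have hmono := monotoneOn_Ici_of_hasDerivAt_nonneg (a := 0)
    (fun t => ((hasDerivAt_pow 2 t).div_const 2).sub (hasDerivAt_levyKernel t))
    (fun t _ => by linarith [levyKernel_nonneg t, show levyKernel t = exp (-t) - 1 + t from rfl])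
  simpa [levyKernel_zero] using hmono self_mem_Ici ht ht

lemma levyKernel_le_min {t : ℝ} (ht : 0 ≤ t) : levyKernel t ≤ min t (t ^ 2) :=
  le_min (levyKernel_le_self ht) ((levyKernel_le_sq_div_two ht).trans (by nlinarith))

lemma one_sub_exp_neg_mul_le {l : ℝ} (hl : 1 ≤ l) (t : ℝ) :
    1 - exp (-(l * t)) ≤ l * (1 - exp (-t)) := by
  have := one_add_mul_self_le_rpow_one_add (by linarith [exp_pos (-t)] : -1 ≤ exp (-t) - 1) hl
  rw [add_sub_cancel, ← exp_mul, show -t * l = -(l * t) by ring] at this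
  linarith

lemma levyKernel_mul_le {l t : ℝ} (hl : 1 ≤ l) (ht : 0 ≤ t) :
    levyKernel (l * t) ≤ l ^ 2 * levyKernel t := by
  have hmono := monotoneOn_Ici_of_hasDerivAt_nonneg (a := 0)
    (f := fun t => l ^ 2 * levyKernel t - levyKernel (l * t))
    (fun t => ((hasDerivAt_levyKernel t).const_mul (l ^ 2)).sub
      ((hasDerivAt_levyKernel (l * t)).comp t ((hasDerivAt_id t).const_mul l)))
    (fun t _ => by
      have := mul_le_mul_of_nonneg_left (one_sub_exp_neg_mul_le hl t) (by linarith : 0 ≤ l)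
      simp only [mul_one]
      nlinarith)
  simpa [levyKernel_zero] using hmono self_mem_Ici ht ht

lemma integrableOn_min_sq_of_lintegral_lt_top {ρ : Measure ℝ}
    (h : ∫⁻ v in Ioi (0:ℝ), ENNReal.ofReal (min v (v ^ 2)) ∂ρ < ⊤) :
    IntegrableOn (fun v => min v (v ^ 2)) (Ioi 0) ρ := by
  refine ⟨(continuous_id.min (continuous_pow 2)).aestronglyMeasurable,
    (hasFiniteIntegral_iff_ofReal ?_).2 h⟩
  filter_upwards [ae_restrict_mem measurableSet_Ioi] with v (hv : 0 < v)
  exact le_min hv.le (by positivity)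

lemma levyKernel_mul_le_mul_min {b v : ℝ} (hb : 0 ≤ b) (hv : 0 ≤ v) :
    levyKernel (b * v) ≤ (b + b ^ 2) * min v (v ^ 2) := by
  refine (levyKernel_le_min (mul_nonneg hb hv)).trans ?_
  rcases le_total v (v ^ 2) with h | h
  · rw [min_eq_left h]; nlinarith [min_le_left (b * v) ((b * v) ^ 2)]
  · rw [min_eq_right h]; nlinarith [min_le_right (b * v) ((b * v) ^ 2)]

section LaplaceExponent

variable {a : ℝ} {ρ : Measure ℝ}

lemma integrableOn_levyKernel_mul (hρ : IntegrableOn (fun v => min v (v ^ 2)) (Ioi 0) ρ)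
    {b : ℝ} (hb : 0 ≤ b) : IntegrableOn (fun v => levyKernel (b * v)) (Ioi 0) ρ :=
  Integrable.mono' (hρ.const_mul (b + b ^ 2))
    (continuous_levyKernel.comp (continuous_const_mul b)).aestronglyMeasurable
    ((ae_restrict_mem measurableSet_Ioi).mono fun v (hv : 0 < v) => by
      rw [Real.norm_of_nonneg (levyKernel_nonneg _)]
      exact levyKernel_mul_le_mul_min hb hv.le)

noncomputable def laplaceExponent (a : ℝ) (ρ : Measure ℝ) (b : ℝ) : ℝ :=
  a * b ^ 2 + ∫ v in Ioi 0, levyKernel (b * v) ∂ρ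

lemma laplaceExponent_zero : laplaceExponent a ρ 0 = 0 := by
  simp [laplaceExponent, levyKernel_zero]

lemma laplaceExponent_nonneg (ha : 0 ≤ a) (b : ℝ) : 0 ≤ laplaceExponent a ρ b :=
  add_nonneg (by positivity) (integral_nonneg fun _ => levyKernel_nonneg _)

lemma laplaceExponent_monotoneOn (ha : 0 ≤ a)
    (hρ : IntegrableOn (fun v => min v (v ^ 2)) (Ioi 0) ρ) :
    MonotoneOn (laplaceExponent a ρ) (Ici 0) := fun b hb b' hb' hbb' =>
  add_le_add (by gcongr)
    (setIntegral_mono_on (integrableOn_levyKernel_mul hρ hb) (integrableOn_levyKernel_mul hρ hb')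
      measurableSet_Ioi fun v (hv : 0 < v) =>
        levyKernel_monotoneOn (mul_nonneg hb hv.le) (mul_nonneg hb' hv.le)
          (mul_le_mul_of_nonneg_right hbb' hv.le))

lemma laplaceExponent_mul_le (hρ : IntegrableOn (fun v => min v (v ^ 2)) (Ioi 0) ρ)
    {l b : ℝ} (hl : 1 ≤ l) (hb : 0 ≤ b) :
    laplaceExponent a ρ (l * b) ≤ l ^ 2 * laplaceExponent a ρ b := by
  have hint : ∫ v in Ioi 0, levyKernel (l * b * v) ∂ρ ≤
      ∫ v in Ioi 0, l ^ 2 * levyKernel (b * v) ∂ρ :=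
    setIntegral_mono_on (integrableOn_levyKernel_mul hρ (by positivity))
      ((integrableOn_levyKernel_mul hρ hb).const_mul _) measurableSet_Ioi fun v (hv : 0 < v) => by
        rw [mul_assoc]; exact levyKernel_mul_le hl (mul_nonneg hb hv.le)
  rw [integral_const_mul] at hint
  rw [laplaceExponent, laplaceExponent, mul_add, show a * (l * b) ^ 2 = l ^ 2 * (a * b ^ 2) by ring]
  exact add_le_add_right hint _

lemma laplaceExponent_mul_div_le (ha : 0 ≤ a)
    (hρ : IntegrableOn (fun v => min v (v ^ 2)) (Ioi 0) ρ) {b z : ℝ} (hb : 0 ≤ b)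
    (hz : 0 ≤ z) :
    laplaceExponent a ρ (b * z) / laplaceExponent a ρ z ≤ max 1 (b ^ 2) := by
  have hnn := laplaceExponent_nonneg (ρ := ρ) ha z
  refine div_le_of_le_mul₀ hnn (by positivity) ?_
  rcases le_total b 1 with hb1 | hb1
  · calc laplaceExponent a ρ (b * z) ≤ laplaceExponent a ρ z :=
          laplaceExponent_monotoneOn ha hρ (mul_nonneg hb hz) hz (mul_le_of_le_one_left hz hb1)
      _ ≤ max 1 (b ^ 2) * laplaceExponent a ρ z := le_mul_of_one_le_left hnn (le_max_left _ _)
  · exact (laplaceExponent_mul_le hρ hb1 hz).trans (by gcongr; exact le_max_right _ _)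

lemma tendsto_laplaceExponent_div (hρ : IntegrableOn (fun v => min v (v ^ 2)) (Ioi 0) ρ) :
    Tendsto (fun b => laplaceExponent a ρ b / b) (𝓝[>] 0) (𝓝 0) := by
  have hlin (c : ℝ) : Tendsto (fun b => c * b) (𝓝[>] 0) (𝓝 0) :=
    ((continuous_const_mul c).tendsto' 0 0 (mul_zero c)).mono_left nhdsWithin_le_nhds
  have hdom : Tendsto (fun b => ∫ v in Ioi 0, levyKernel (b * v) / b ∂ρ) (𝓝[>] 0)
      (𝓝 (∫ v in Ioi 0, (0 : ℝ) ∂ρ)) := by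
    refine tendsto_integral_filter_of_dominated_convergence (fun v => min v (v ^ 2))
      (Eventually.of_forall fun b =>
        ((continuous_levyKernel.comp (continuous_const_mul b)).div_const b).aestronglyMeasurable)
      ?_ hρ ?_
    · filter_upwards [Ioc_mem_nhdsGT one_pos] with b ⟨hb0, hb1⟩
      filter_upwards [ae_restrict_mem measurableSet_Ioi] with v (hv : 0 < v)
      rw [Real.norm_of_nonneg (div_nonneg (levyKernel_nonneg _) hb0.le), div_le_iff₀ hb0]
      refine (levyKernel_le_min (by positivity)).trans ?_
      rw [min_mul_of_nonneg _ _ hb0.le]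
      exact min_le_min (by rw [mul_comm]) (by nlinarith)
    · filter_upwards [ae_restrict_mem measurableSet_Ioi] with v (hv : 0 < v)
      refine tendsto_of_tendsto_of_tendsto_of_le_of_le' tendsto_const_nhds (hlin (v ^ 2 / 2))
        ?_ ?_ <;> filter_upwards [self_mem_nhdsWithin] with b (hb : 0 < b)
      · exact div_nonneg (levyKernel_nonneg _) hb.le
      · rw [div_le_iff₀ hb]
        nlinarith [levyKernel_le_sq_div_two (mul_nonneg hb.le hv.le)]
  rw [integral_zero] at hdom
  simpa using ((hlin a).add hdom).congr' (by
    filter_upwards [self_mem_nhdsWithin] with b (hb : 0 < b)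
    rw [laplaceExponent, integral_div]
    field_simp)

end LaplaceExponent

def RegularlyVaryingAtZero (f : ℝ → ℝ) (α : ℝ) : Prop :=
  ∀ b > 0, Tendsto (fun x => f (b * x) / f x) (𝓝[>] 0) (𝓝 (b ^ α))

namespace RegularlyVaryingAtZero

variable {f : ℝ → ℝ} {α : ℝ}

lemma eventually_ne_zero (hf : RegularlyVaryingAtZero f α) : ∀ᶠ x in 𝓝[>] 0, f x ≠ 0 := by
  filter_upwards [(hf 1 one_pos).eventually_ne (by simp : (1 : ℝ) ^ α ≠ 0)] with x hx hfx
  simp [hfx] at hx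

lemma pos_of_monotoneOn (hf : RegularlyVaryingAtZero f α) (hmono : MonotoneOn f (Ici 0))
    (hnn : ∀ x ≥ 0, 0 ≤ f x) {y : ℝ} (hy : 0 < y) : 0 < f y := by
  obtain ⟨x, hx, ⟨hx0, hxy⟩⟩ := (hf.eventually_ne_zero.and (Ioo_mem_nhdsGT hy)).exists
  exact ((hnn x hx0.le).lt_of_ne' hx).trans_le (hmono hx0.le hy.le hxy.le)

lemma tendsto_mul_div {b w M : ℝ} (hf : RegularlyVaryingAtZero f α) (hb : 0 < b)
    (hM : ∀ z ≥ 0, |f (b * z) / f z| ≤ M) {u z : ℕ → ℝ} (hu : Tendsto u atTop (𝓝 w))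
    (hz : Tendsto z atTop (𝓝 0)) (hz0 : ∀ n, 0 ≤ z n) (hpos : w ≠ 0 → ∀ᶠ n in atTop, 0 < z n) :
    Tendsto (fun n => u n * (f (b * z n) / f (z n))) atTop (𝓝 (w * b ^ α)) := by
  rcases eq_or_ne w 0 with rfl | hw
  · rw [zero_mul]
    exact hu.zero_mul_isBoundedUnder_le
      ⟨M, eventually_map.2 (Eventually.of_forall fun n => hM _ (hz0 n))⟩
  · exact hu.mul ((hf b hb).comp (tendsto_nhdsWithin_iff.2 ⟨hz, hpos hw⟩))

end RegularlyVaryingAtZero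

lemma exists_tendsto_div_of_sum_eq {ι : Type*} [Fintype ι] {F : ι → ℝ → ℝ} {C : ℝ}
    (hF : ∀ i, ∀ x > 0, 0 ≤ F i x) (hsum : ∀ x > 0, ∑ i, F i x = x * C) :
    ∃ (x : ℕ → ℝ) (w : ι → ℝ), (∀ n, 0 < x n) ∧ Tendsto x atTop (𝓝 0) ∧ (∀ i, 0 ≤ w i) ∧
      ∀ i, Tendsto (fun n => F i (x n) / x n) atTop (𝓝 (w i)) := by
  have hx (n : ℕ) : 0 < 1 / ((n : ℝ) + 1) := Nat.one_div_pos_of_nat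
  have hmem (n : ℕ) : (fun i => F i (1 / (n + 1)) / (1 / (n + 1))) ∈ univ.pi fun _ => Icc 0 C := by
    have hnn (i : ι) : 0 ≤ F i (1 / (n + 1)) / (1 / (n + 1)) := div_nonneg (hF i _ (hx n)) (hx n).le
    have hsum' : ∑ i, F i (1 / (n + 1)) / (1 / (n + 1)) = C := by
      rw [← Finset.sum_div, hsum _ (hx n), mul_div_cancel_left₀ _ (hx n).ne']
    exact fun i _ => ⟨hnn i, hsum' ▸ Finset.single_le_sum (fun j _ => hnn j) (Finset.mem_univ i)⟩
  obtain ⟨w, hw, φ, hφ, hlim⟩ := (isCompact_univ_pi fun _ => isCompact_Icc).tendsto_subseq hmem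
  exact ⟨fun n => 1 / (φ n + 1), w, fun n => hx (φ n),
    tendsto_one_div_add_atTop_nhds_zero_nat.comp hφ.tendsto_atTop, fun i => (hw i (mem_univ i)).1,
    fun i => tendsto_pi_nhds.1 hlim i⟩

theorem exists_sum_rpow_of_sum_comp_eq {ι : Type*} [Fintype ι] {J G : ι → ℝ → ℝ} {α : ι → ℝ}
    {Jt : ℝ → ℝ} (hreg : ∀ i, RegularlyVaryingAtZero (J i) (α i)) (hJ0 : ∀ i, J i 0 = 0)
    (hJpos : ∀ i, ∀ y > 0, 0 < J i y)
    (hbound : ∀ i, ∀ b > 0, ∃ M, ∀ z ≥ 0, J i (b * z) / J i z ≤ M)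
    (hG : ∀ i, ContinuousWithinAt (G i) (Ici 0) 0) (hGnn : ∀ i, ∀ x ≥ 0, 0 ≤ G i x)
    (hG0 : ∀ i, G i 0 = 0) (hEq : ∀ b > 0, ∀ x > 0, ∑ i, J i (b * G i x) = x * Jt b) :
    ∃ w : ι → ℝ, (∀ i, 0 ≤ w i) ∧ ∀ b > 0, Jt b = ∑ i, w i * b ^ α i := by
  have hJnn (i : ι) (y : ℝ) (hy : 0 ≤ y) : 0 ≤ J i y := by
    rcases hy.eq_or_lt with rfl | hy
    exacts [(hJ0 i).ge, (hJpos i y hy).le]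
  obtain ⟨x, w, hx, hx0, hw, hlim⟩ := exists_tendsto_div_of_sum_eq
    (F := fun i x => J i (G i x)) (fun i x hx => hJnn i _ (hGnn i x hx.le))
    (fun x hx => by simpa using hEq 1 one_pos x hx)
  refine ⟨w, hw, fun b hb => ?_⟩
  have hterm (n : ℕ) (i : ι) : J i (b * G i (x n)) / x n =
      J i (G i (x n)) / x n * (J i (b * G i (x n)) / J i (G i (x n))) := by
    rcases (hGnn i _ (hx n).le).eq_or_lt with h | h
    · simp [← h, hJ0]
    · field_simp [(hJpos i _ h).ne', (hx n).ne']
  have hJt (n : ℕ) : Jt b =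
      ∑ i, J i (G i (x n)) / x n * (J i (b * G i (x n)) / J i (G i (x n))) := by
    rw [← Finset.sum_congr rfl fun i _ => hterm n i, ← Finset.sum_div, hEq b hb _ (hx n),
      mul_div_cancel_left₀ _ (hx n).ne']
  refine tendsto_nhds_unique (l := (atTop : Filter ℕ)) (tendsto_const_nhds.congr hJt)
    (tendsto_finsetSum _ fun i _ => ?_)
  obtain ⟨M, hM⟩ := hbound i b hb
  have hGx : Tendsto (fun n => G i (x n)) atTop (𝓝 0) :=
    hG0 i ▸ (hG i).tendsto.comp (tendsto_nhdsWithin_iff.2 ⟨hx0, .of_forall fun n => (hx n).le⟩)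
  refine (hreg i).tendsto_mul_div (M := M) hb (fun z hz => ?_) (hlim i) hGx
    (fun n => hGnn i _ (hx n).le) (fun hwi => ((hlim i).eventually_ne hwi).mono fun n hn => ?_)
  · rw [abs_of_nonneg (div_nonneg (hJnn i _ (by positivity)) (hJnn i z hz))]
    exact hM z hz
  · exact (hGnn i _ (hx n).le).lt_of_ne' fun h => hn (by simp [h, hJ0])

lemma one_lt_of_mul_rpow_le {f : ℝ → ℝ} {η α : ℝ} (hη : 0 < η) (hle : ∀ b > 0, η * b ^ α ≤ f b)
    (hf : Tendsto (fun b => f b / b) (𝓝[>] 0) (𝓝 0)) : 1 < α := by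
  by_contra! hα
  have hη_le : ∀ᶠ b in 𝓝[>] 0, η ≤ f b / b := by
    filter_upwards [Ioc_mem_nhdsGT one_pos] with b ⟨hb0, hb1⟩
    rw [le_div_iff₀ hb0]
    calc η * b = η * b ^ (1 : ℝ) := by rw [rpow_one]
      _ ≤ η * b ^ α := mul_le_mul_of_nonneg_left (rpow_le_rpow_of_exponent_ge hb0 hb1 hα) hη.le
      _ ≤ f b := hle b hb0
  linarith [ge_of_tendsto hf hη_le]

lemma le_two_of_mul_rpow_le {f : ℝ → ℝ} {η α C : ℝ} (hη : 0 < η)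
    (hle : ∀ b ≥ 1, η * b ^ α ≤ f b) (hf : ∀ b ≥ 1, f b ≤ C * b ^ 2) : α ≤ 2 := by
  by_contra! hα
  obtain ⟨b, hbC, hb1⟩ := (((tendsto_rpow_atTop (sub_pos.2 hα)).eventually_gt_atTop (C / η)).and
    (eventually_ge_atTop 1)).exists
  have hb2 : 0 < b ^ 2 := by positivity
  have : η * b ^ (α - 2) * b ^ 2 ≤ C * b ^ 2 := by
    rw [mul_assoc, ← rpow_natCast, ← rpow_add (by linarith)]
    simpa using (hle b hb1).trans (hf b hb1)
  rw [div_lt_iff₀' hη] at hbC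
  nlinarith

lemma mem_Ioc_of_laplaceExponent_eq_sum_rpow {c : ℝ} {μ : Measure ℝ}
    (hμ : IntegrableOn (fun v => min v (v ^ 2)) (Ioi 0) μ) {ι : Type*} [Fintype ι]
    {w α : ι → ℝ} (hw : ∀ i, 0 ≤ w i) (hrep : ∀ b > 0, laplaceExponent c μ b = ∑ i, w i * b ^ α i)
    {i : ι} (hi : w i ≠ 0) : α i ∈ Ioc 1 2 := by
  have hle (b : ℝ) (hb : 0 < b) : w i * b ^ α i ≤ laplaceExponent c μ b :=
    hrep b hb ▸ Finset.single_le_sum (fun j _ => mul_nonneg (hw j) (rpow_nonneg hb.le _))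
      (Finset.mem_univ i)
  have hquad (b : ℝ) (hb : 1 ≤ b) : laplaceExponent c μ b ≤ laplaceExponent c μ 1 * b ^ 2 := by
    simpa [mul_comm] using laplaceExponent_mul_le hμ hb zero_le_one
  exact ⟨one_lt_of_mul_rpow_le ((hw i).lt_of_ne' hi) hle (tendsto_laplaceExponent_div hμ),
    le_two_of_mul_rpow_le ((hw i).lt_of_ne' hi) (fun b hb => hle b (by linarith)) hquad⟩

theorem exists_sum_mul_eq_sum_injective {ι κ : Type*} [Fintype ι] (w : ι → ℝ) (α : ι → κ)
    (hw : ∀ i, 0 ≤ w i) :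
    ∃ g ≤ Fintype.card ι, ∃ (η : Fin g → ℝ) (β : Fin g → κ), (∀ k, 0 < η k) ∧
      Function.Injective β ∧ (∀ k, ∃ i, w i ≠ 0 ∧ β k = α i) ∧
      ∀ p : κ → ℝ, ∑ i, w i * p (α i) = ∑ k, η k * p (β k) := by
  classical
  set S := Finset.univ.filter fun i => w i ≠ 0
  set T := S.image α
  set e := T.equivFin
  set η : κ → ℝ := fun t => ∑ i ∈ S with α i = t, w i
  refine ⟨T.card, Finset.card_image_le.trans (Finset.card_filter_le _ _), fun k => η (e.symm k),
    fun k => e.symm k, fun k => ?_, Subtype.val_injective.comp e.symm.injective, fun k => ?_,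
    fun p => ?_⟩
  · obtain ⟨i, hi, hik⟩ := Finset.mem_image.1 (e.symm k).2
    refine Finset.sum_pos (fun j hj => ?_) ⟨i, Finset.mem_filter.2 ⟨hi, hik⟩⟩
    exact (hw j).lt_of_ne' (Finset.mem_filter.1 (Finset.mem_filter.1 hj).1).2
  · obtain ⟨i, hi, hik⟩ := Finset.mem_image.1 (e.symm k).2
    exact ⟨i, (Finset.mem_filter.1 hi).2, hik.symm⟩
  · calc ∑ i, w i * p (α i) = ∑ i ∈ S, w i * p (α i) :=
          (Finset.sum_filter_of_ne fun i _ h => left_ne_zero_of_mul h).symm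
      _ = ∑ t ∈ T, η t * p t := by
          rw [← Finset.sum_fiberwise_of_maps_to fun i hi => Finset.mem_image_of_mem α hi]
          refine Finset.sum_congr rfl fun t _ => ?_
          rw [Finset.sum_mul]
          exact Finset.sum_congr rfl fun i hi => by rw [(Finset.mem_filter.1 hi).2]
      _ = ∑ k, η (e.symm k) * p (e.symm k) := by
          rw [← Finset.sum_coe_sort T, ← e.symm.sum_comp]

theorem stmt_0_general
    (d : ℕ)
    (q : Fin d → ℝ) (hq : ∀ i, 0 ≤ q i)
    (ν : Fin d → Measure ℝ)
    (hν : ∀ i, ∫⁻ v in Set.Ioi (0:ℝ), ENNReal.ofReal (min v (v^2)) ∂(ν i) < ⊤)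
    (J : Fin d → ℝ → ℝ)
    (hJ : ∀ i b, J i b =
      q i / 2 * b^2 + ∫ v in Set.Ioi (0:ℝ), (Real.exp (-(b*v)) - 1 + b*v) ∂(ν i))
    (α : Fin d → ℝ)
    (hreg : ∀ i, ∀ b > (0:ℝ),
      Filter.Tendsto (fun x => J i (b*x) / J i x) (nhdsWithin 0 (Set.Ioi 0)) (nhds (b ^ α i)))
    (G : Fin d → ℝ → ℝ)
    (hGcont : ∀ i, ContinuousOn (G i) (Set.Ici 0))
    (hGnonneg : ∀ i, ∀ x ≥ (0:ℝ), 0 ≤ G i x)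
    (hG0 : ∀ i, G i 0 = 0)
    (c : ℝ)
    (μ : Measure ℝ)
    (hμ : ∫⁻ v in Set.Ioi (0:ℝ), ENNReal.ofReal (min v (v^2)) ∂μ < ⊤)
    (Jt : ℝ → ℝ)
    (hJt : ∀ b, Jt b = c * b^2 + ∫ v in Set.Ioi (0:ℝ), (Real.exp (-(b*v)) - 1 + b*v) ∂μ)
    (hEq : ∀ b ≥ (0:ℝ), ∀ x ≥ (0:ℝ), ∑ i, J i (b * G i x) = x * Jt b)
    (hJtne : ∃ b > (0:ℝ), Jt b ≠ 0) :
    ∃ g : ℕ, 1 ≤ g ∧ g ≤ d ∧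
      ∃ η β : Fin g → ℝ,
        (∀ k, 0 < η k) ∧
        Function.Injective β ∧
        (∀ k, β k ∈ Set.Ioc (1:ℝ) 2) ∧
        (∀ k, ∃ i, β k = α i) ∧
        (∀ b ≥ (0:ℝ), Jt b = ∑ k, η k * b ^ β k) := by
  replace hreg : ∀ i, RegularlyVaryingAtZero (J i) (α i) := hreg
  obtain rfl : J = fun i => laplaceExponent (q i / 2) (ν i) := funext fun i => funext (hJ i)
  obtain rfl : Jt = laplaceExponent c μ := funext hJt
  have hq2 (i : Fin d) : 0 ≤ q i / 2 := div_nonneg (hq i) zero_le_two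
  have hνi (i : Fin d) := integrableOn_min_sq_of_lintegral_lt_top (hν i)
  have hμi := integrableOn_min_sq_of_lintegral_lt_top hμ
  obtain ⟨w, hw, hrep⟩ := exists_sum_rpow_of_sum_comp_eq hreg (fun _ => laplaceExponent_zero)
    (fun i _ hy => (hreg i).pos_of_monotoneOn (laplaceExponent_monotoneOn (hq2 i) (hνi i))
      (fun y _ => laplaceExponent_nonneg (hq2 i) y) hy)
    (fun i _ hb => ⟨_, fun _ hz => laplaceExponent_mul_div_le (hq2 i) (hνi i) hb.le hz⟩)
    (fun i => (hGcont i).continuousWithinAt self_mem_Ici) hGnonneg hG0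
    (fun b hb x hx => hEq b hb.le x hx.le)
  obtain ⟨g, hgd, η, β, hη, hβ, hβα, hsum⟩ := exists_sum_mul_eq_sum_injective w α hw
  have hβ_mem (k : Fin g) : β k ∈ Ioc 1 2 := by
    obtain ⟨i, hi, hk⟩ := hβα k
    exact hk ▸ mem_Ioc_of_laplaceExponent_eq_sum_rpow hμi hw hrep hi
  obtain ⟨b₀, hb₀, hJtb₀⟩ := hJtne
  refine ⟨g, Nat.one_le_iff_ne_zero.2 ?_, by simpa using hgd, η, β, hη, hβ, hβ_mem,
    fun k => (hβα k).imp fun _ => And.right, fun b hb => ?_⟩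
  · rintro rfl
    exact hJtb₀ (by simp [hrep b₀ hb₀, hsum])
  rcases hb.eq_or_lt with rfl | hb
  · rw [laplaceExponent_zero]
    exact (Finset.sum_eq_zero fun k _ => by
      rw [zero_rpow (by linarith [(hβ_mem k).1]), mul_zero]).symm
  · exact (hrep b hb).trans (hsum fun a => b ^ a)

/-- classification of the Laplace exponent J̃ appearing in the affine
identity Σᵢ Jᵢ(b·Gᵢ(x)) = x·J̃(b), under regular variation of each Jᵢ at zero. -/
theorem stmt_0
    (d : ℕ) (hd : 1 ≤ d)
    (q : Fin d → ℝ) (hq : ∀ i, 0 ≤ q i)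
    (ν : Fin d → Measure ℝ)
    (hν : ∀ i, ∫⁻ v in Set.Ioi (0:ℝ), ENNReal.ofReal (min v (v^2)) ∂(ν i) < ⊤)
    (J : Fin d → ℝ → ℝ)
    (hJ : ∀ i b, J i b =
      q i / 2 * b^2 + ∫ v in Set.Ioi (0:ℝ), (Real.exp (-(b*v)) - 1 + b*v) ∂(ν i))
    (hJne : ∀ i, ∃ b > (0:ℝ), J i b ≠ 0)
    (α : Fin d → ℝ)
    (hreg : ∀ i, ∀ b > (0:ℝ),
      Filter.Tendsto (fun x => J i (b*x) / J i x) (nhdsWithin 0 (Set.Ioi 0)) (nhds (b ^ α i)))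
    (G : Fin d → ℝ → ℝ)
    (hGcont : ∀ i, ContinuousOn (G i) (Set.Ici 0))
    (hGnonneg : ∀ i, ∀ x ≥ (0:ℝ), 0 ≤ G i x)
    (hG0 : ∀ i, G i 0 = 0)
    (c : ℝ) (hc : 0 ≤ c)
    (μ : Measure ℝ)
    (hμ : ∫⁻ v in Set.Ioi (0:ℝ), ENNReal.ofReal (min v (v^2)) ∂μ < ⊤)
    (Jt : ℝ → ℝ)
    (hJt : ∀ b, Jt b = c * b^2 + ∫ v in Set.Ioi (0:ℝ), (Real.exp (-(b*v)) - 1 + b*v) ∂μ)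
    (hEq : ∀ b ≥ (0:ℝ), ∀ x ≥ (0:ℝ), ∑ i, J i (b * G i x) = x * Jt b)
    (hJtne : ∃ b > (0:ℝ), Jt b ≠ 0) :
    ∃ g : ℕ, 1 ≤ g ∧ g ≤ d ∧
      ∃ η β : Fin g → ℝ,
        (∀ k, 0 < η k) ∧
        Function.Injective β ∧
        (∀ k, β k ∈ Set.Ioc (1:ℝ) 2) ∧
        (∀ k, ∃ i, β k = α i) ∧
        (∀ b ≥ (0:ℝ), Jt b = ∑ k, η k * b ^ β k) :=
  stmt_0_general d q hq ν hν J hJ α hreg G hGcont hGnonneg hG0 c μ hμ Jt hJt hEq hJtne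
end

section
/- Let μ be a nonnegative Borel measure on (0,∞) with ∫₀^∞ (v ∧ v²) μ(dv) < ∞ and define J_μ(b) := ∫₀^∞ (e^{−bv} − 1 + bv) μ(dv) for b ≥ 0. Suppose there exist an integer g ≥ 1, reals η_1,…,η_g > 0 and exponents 2 ≥ α_1 > α_2 > … > α_g > 1 such that J_μ(b) = Σ_{k=1}^g η_k b^{α_k} for all b ≥ 0. Then α_1 < 2, i.e. all exponents α_k lie in the open interval (1,2). -/
open MeasureTheory Real Set Filter Topology

/-! If `α₁ = 2`, the sum of powers grows at least like `η₁ b²`. But `J_μ(b) = o(b²)` as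
`b → ∞`: since `e^{-x} - 1 + x ≤ min x x²`, the integrand divided by `b²` is at most
`min (v / b) v²`, which is dominated by `min v v²` and tends to `0` pointwise. -/

lemma exp_neg_sub_one_add_le_min {x : ℝ} (hx : 0 ≤ x) :
    exp (-x) - 1 + x ≤ min x (x ^ 2) := by
  have hexp : exp (-x) ≤ 1 := exp_le_one_iff.mpr (neg_nonpos.mpr hx)
  refine le_min (by linarith) ?_
  rcases le_or_gt x 1 with hx1 | hx1
  · have h := abs_exp_sub_one_sub_id_le (x := -x) (by rwa [abs_neg, abs_of_nonneg hx])
    rw [neg_sq] at h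
    linarith [(abs_le.mp h).2]
  · nlinarith

lemma exp_neg_sub_one_add_nonneg (x : ℝ) : 0 ≤ exp (-x) - 1 + x := by
  linarith [add_one_le_exp (-x)]

lemma exp_neg_mul_sub_one_add_le {b v : ℝ} (hb : 0 < b) (hv : 0 ≤ v) :
    exp (-(b * v)) - 1 + b * v ≤ b ^ 2 * min (v / b) (v ^ 2) := by
  calc exp (-(b * v)) - 1 + b * v ≤ min (b * v) ((b * v) ^ 2) :=
        exp_neg_sub_one_add_le_min (by positivity)
    _ = b ^ 2 * min (v / b) (v ^ 2) := by
        rw [mul_min_of_nonneg _ _ (by positivity)]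
        congr 1
        · field_simp
        · ring

lemma integrable_min_self_sq_restrict_Ioi {μ : Measure ℝ}
    (hμ : ∫⁻ v in Ioi (0 : ℝ), ENNReal.ofReal (min v (v ^ 2)) ∂μ < ⊤) :
    Integrable (fun v : ℝ => min v (v ^ 2)) (μ.restrict (Ioi 0)) := by
  refine ⟨(continuous_id.min (continuous_pow 2)).aestronglyMeasurable, ?_⟩
  rw [hasFiniteIntegral_iff_ofReal]
  · exact hμ
  · filter_upwards [ae_restrict_mem measurableSet_Ioi] with v hv
    exact le_min (le_of_lt hv) (sq_nonneg v)

lemma norm_min_div_sq_le {b v : ℝ} (hb : 1 ≤ b) (hv : 0 ≤ v) :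
    ‖min (v / b) (v ^ 2)‖ ≤ min v (v ^ 2) := by
  rw [norm_of_nonneg (le_min (div_nonneg hv (by linarith)) (sq_nonneg v))]
  exact min_le_min (div_le_self hv hb) le_rfl

lemma tendsto_integral_min_div_sq_atTop {ν : Measure ℝ}
    (hint : Integrable (fun v : ℝ => min v (v ^ 2)) ν) (hν : ∀ᵐ v ∂ν, 0 ≤ v) :
    Tendsto (fun b : ℝ => ∫ v, min (v / b) (v ^ 2) ∂ν) atTop (𝓝 0) := by
  have hlim : Tendsto (fun b : ℝ => ∫ v, min (v / b) (v ^ 2) ∂ν) atTop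
      (𝓝 (∫ _, (0 : ℝ) ∂ν)) := by
    refine tendsto_integral_filter_of_dominated_convergence _
      (Eventually.of_forall fun b =>
        ((continuous_id.div_const b).min (continuous_pow 2)).aestronglyMeasurable)
      ?_ hint ?_
    · filter_upwards [eventually_ge_atTop 1] with b hb
      filter_upwards [hν] with v hv
      exact norm_min_div_sq_le hb hv
    · filter_upwards [hν] with v hv
      have h := (tendsto_const_nhds (x := v).div_atTop tendsto_id).min
        (tendsto_const_nhds (x := v ^ 2))
      rwa [min_eq_left (sq_nonneg v)] at h
  rwa [integral_zero] at hlim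

theorem tendsto_integral_exp_neg_mul_sub_one_add_div_sq_atTop {μ : Measure ℝ}
    (hμ : ∫⁻ v in Ioi (0 : ℝ), ENNReal.ofReal (min v (v ^ 2)) ∂μ < ⊤) :
    Tendsto (fun b : ℝ => (∫ v in Ioi (0 : ℝ), (exp (-(b * v)) - 1 + b * v) ∂μ) / b ^ 2)
      atTop (𝓝 0) := by
  have hint := integrable_min_self_sq_restrict_Ioi hμ
  have hpos : ∀ᵐ v ∂μ.restrict (Ioi 0), 0 < v := ae_restrict_mem measurableSet_Ioi
  refine squeeze_zero' ?_ ?_ (tendsto_integral_min_div_sq_atTop hint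
    (hpos.mono fun v hv => le_of_lt hv))
  · exact Eventually.of_forall fun b => div_nonneg
      (integral_nonneg fun v => exp_neg_sub_one_add_nonneg (b * v)) (sq_nonneg b)
  · filter_upwards [eventually_ge_atTop 1] with b hb
    have hb0 : 0 < b := by linarith
    rw [div_le_iff₀' (by positivity), ← integral_const_mul]
    refine integral_mono_of_nonneg ?_ ?_ ?_
    · exact Eventually.of_forall fun v => exp_neg_sub_one_add_nonneg (b * v)
    · refine (hint.mono' ((continuous_id.div_const b).min
        (continuous_pow 2)).aestronglyMeasurable ?_).const_mul _
      filter_upwards [hpos] with v hv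
      exact norm_min_div_sq_le hb hv.le
    · filter_upwards [hpos] with v hv
      exact exp_neg_mul_sub_one_add_le hb0 hv.le

/-- if the Laplace exponent J_μ of a measure μ with
∫ (v ∧ v²) μ(dv) < ∞ is a finite sum of powers Σ η_k b^{α_k} with
2 ≥ α_1 > ... > α_g > 1, then all exponents lie in the open interval (1,2). -/
theorem stmt_1
    (μ : Measure ℝ)
    (hμ : ∫⁻ v in Set.Ioi (0:ℝ), ENNReal.ofReal (min v (v^2)) ∂μ < ⊤)
    (J : ℝ → ℝ)
    (hJ : ∀ b, J b = ∫ v in Set.Ioi (0:ℝ), (Real.exp (-(b*v)) - 1 + b*v) ∂μ)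
    (g : ℕ) (hg : 1 ≤ g)
    (η α : Fin g → ℝ)
    (hη : ∀ k, 0 < η k)
    (hanti : StrictAnti α)
    (hα1 : α ⟨0, hg⟩ ≤ 2)
    (hform : ∀ b ≥ (0:ℝ), J b = ∑ k, η k * b ^ α k) :
    ∀ k, α k < 2 := by
  intro k
  by_contra! hk
  have hαk : α k = 2 := le_antisymm ((hanti.antitone (Nat.zero_le k.val)).trans hα1) hk
  have hlim := tendsto_integral_exp_neg_mul_sub_one_add_div_sq_atTop hμ
  simp_rw [← hJ] at hlim
  have hlower : ∀ b > (0 : ℝ), η k ≤ J b / b ^ 2 := fun b hb => by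
    rw [le_div_iff₀ (by positivity), hform b hb.le, ← rpow_two, ← hαk]
    exact Finset.single_le_sum (f := fun j => η j * b ^ α j)
      (fun j _ => mul_nonneg (hη j).le (rpow_nonneg hb.le _)) (Finset.mem_univ k)
  linarith [hη k, ge_of_tendsto hlim ((eventually_gt_atTop 0).mono hlower)]
end

section
/- Let ρ be a nonnegative Borel measure on (0,∞) with 0 < ∫₀^∞ (v ∧ v²) ρ(dv) < ∞ and define J_ρ(b) := ∫₀^∞ (e^{−bv} − 1 + bv) ρ(dv). Then for every b₀ > 0 and every b ∈ (0, b₀) one has the strict two-sided bound (J_ρ(b₀)/b₀²)·b² < J_ρ(b) < (J_ρ(b₀)/b₀)·b. -/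
/-!
With `φ x = exp (-x) - 1 + x`, `J b = ∫ φ (b v) dρ(v)`. Elementary calculus shows that
`φ x / x` is strictly increasing and `φ x / x²` strictly decreasing on `(0, ∞)`. Applied at
`x = b v` and `x = b₀ v`, this gives `(b / b₀)² φ (b₀ v) < φ (b v) < (b / b₀) φ (b₀ v)` for
every `v > 0`, and integrating against `ρ`, which is nonzero on `(0, ∞)`, keeps the inequalities
strict. The bound `0 ≤ φ x ≤ min x x²` makes all integrals finite.
-/

open MeasureTheory Real Set Filter

noncomputable def expNegRemainder (x : ℝ) : ℝ := exp (-x) - 1 + x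

local notation "φ" => expNegRemainder

lemma Real.hasDerivAt_exp_neg (x : ℝ) : HasDerivAt (fun x => exp (-x)) (-exp (-x)) x := by
  simpa using (hasDerivAt_neg x).exp

namespace ExpNegRemainder

lemma hasDerivAt (x : ℝ) : HasDerivAt φ (1 - exp (-x)) x :=
  (((hasDerivAt_exp_neg x).sub_const 1).add (hasDerivAt_id x)).congr_deriv (by ring)

lemma continuous : Continuous φ := by
  unfold expNegRemainder; fun_prop

lemma nonneg (x : ℝ) : 0 ≤ φ x := by
  unfold expNegRemainder
  linarith [add_one_le_exp (-x)]

lemma le_min_sq {x : ℝ} (hx : 0 ≤ x) : φ x ≤ min x (x ^ 2) := by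
  have hle_self : φ x ≤ x := by
    unfold expNegRemainder
    linarith [exp_le_one_iff.2 (neg_nonpos.2 hx)]
  rcases le_total x 1 with h1 | h1
  · have hsq : φ x ≤ x ^ 2 := by
      have := abs_exp_sub_one_sub_id_le (x := -x) (by rwa [abs_neg, abs_of_nonneg hx])
      rw [neg_sq] at this
      exact (le_abs_self _).trans (by simpa [expNegRemainder, sub_neg_eq_add] using this)
    exact le_min hle_self hsq
  · exact hle_self.trans (le_min le_rfl (by nlinarith))

lemma mul_le {β v : ℝ} (hβ : 0 ≤ β) (hv : 0 ≤ v) :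
    φ (β * v) ≤ max β (β ^ 2) * min v (v ^ 2) := by
  calc φ (β * v) ≤ min (β * v) ((β * v) ^ 2) := le_min_sq (by positivity)
    _ ≤ min (max β (β ^ 2) * v) (max β (β ^ 2) * v ^ 2) := by
        rw [mul_pow]
        gcongr
        · exact le_max_left _ _
        · exact le_max_right _ _
    _ = max β (β ^ 2) * min v (v ^ 2) := (mul_min_of_nonneg _ _ (by positivity)).symm

lemma one_add_mul_exp_neg_lt_one {x : ℝ} (hx : 0 < x) : (1 + x) * exp (-x) < 1 := by
  rw [exp_neg, mul_inv_lt_iff₀ (exp_pos x)]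
  linarith [add_one_lt_exp hx.ne']

lemma strictMonoOn_div_self : StrictMonoOn (fun x => φ x / x) (Ioi 0) := by
  have hderiv : ∀ x ∈ Ioi (0 : ℝ), HasDerivAt (fun x => φ x / x)
      ((1 - (1 + x) * exp (-x)) / x ^ 2) x := fun x hx =>
    ((hasDerivAt x).div (hasDerivAt_id x) (ne_of_gt hx)).congr_deriv
      (by simp only [expNegRemainder, id]; ring)
  refine strictMonoOn_of_deriv_pos (convex_Ioi 0)
    (fun x hx => (hderiv x hx).continuousAt.continuousWithinAt) fun x hx => ?_
  rw [interior_Ioi] at hx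
  rw [(hderiv x hx).deriv]
  exact div_pos (by linarith [one_add_mul_exp_neg_lt_one hx]) (pow_pos hx 2)

-- This is `-x³` times the derivative of `φ x / x²`.
lemma two_add_mul_exp_neg_add_sub_two_pos {x : ℝ} (hx : 0 < x) :
    0 < (2 + x) * exp (-x) + x - 2 := by
  have hderiv : ∀ x, HasDerivAt (fun x => (2 + x) * exp (-x) + x - 2)
      (1 - (1 + x) * exp (-x)) x := fun x =>
    ((((hasDerivAt_id x).const_add 2).mul (hasDerivAt_exp_neg x)).add
      (hasDerivAt_id x)).sub_const 2 |>.congr_deriv (by simp only [id]; ring)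
  have hmono : StrictMonoOn (fun x => (2 + x) * exp (-x) + x - 2) (Ici 0) := by
    refine strictMonoOn_of_deriv_pos (convex_Ici 0)
      (fun y _ => (hderiv y).continuousAt.continuousWithinAt) fun y hy => ?_
    rw [interior_Ici] at hy
    rw [(hderiv y).deriv]
    linarith [one_add_mul_exp_neg_lt_one hy]
  simpa using hmono self_mem_Ici hx.le hx

lemma strictAntiOn_div_sq : StrictAntiOn (fun x => φ x / x ^ 2) (Ioi 0) := by
  have hderiv : ∀ x ∈ Ioi (0 : ℝ), HasDerivAt (fun x => φ x / x ^ 2)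
      (-x * ((2 + x) * exp (-x) + x - 2) / (x ^ 2) ^ 2) x := fun x hx =>
    ((hasDerivAt x).div (hasDerivAt_pow 2 x) (pow_ne_zero 2 (ne_of_gt hx))).congr_deriv
      (by simp only [expNegRemainder]; push_cast; ring)
  refine strictAntiOn_of_deriv_neg (convex_Ioi 0)
    (fun x hx => (hderiv x hx).continuousAt.continuousWithinAt) fun x hx => ?_
  rw [interior_Ioi] at hx
  rw [(hderiv x hx).deriv]
  exact div_neg_of_neg_of_pos
    (mul_neg_of_neg_of_pos (neg_neg_of_pos hx) (two_add_mul_exp_neg_add_sub_two_pos hx))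
    (pow_pos (pow_pos hx 2) 2)

lemma sq_mul_lt_mul {s x : ℝ} (hs : s ∈ Ioo 0 1) (hx : 0 < x) :
    s ^ 2 * φ x < φ (s * x) ∧ φ (s * x) < s * φ x := by
  obtain ⟨hs0, hs1⟩ := hs
  have hsx : 0 < s * x := mul_pos hs0 hx
  have hlt : s * x < x := by nlinarith
  have hanti := strictAntiOn_div_sq hsx hx hlt
  have hmono := strictMonoOn_div_self hsx hx hlt
  simp only at hanti hmono
  rw [div_lt_div_iff₀ (pow_pos hx 2) (pow_pos hsx 2), mul_pow] at hanti
  rw [div_lt_div_iff₀ hsx hx] at hmono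
  constructor
  · nlinarith [pow_pos hx 2]
  · nlinarith

lemma integrable_comp_mul {μ : Measure ℝ} (hμ : ∀ᵐ v ∂μ, 0 ≤ v)
    (hfin : ∫⁻ v, ENNReal.ofReal (min v (v ^ 2)) ∂μ < ⊤) {β : ℝ} (hβ : 0 ≤ β) :
    Integrable (fun v => φ (β * v)) μ := by
  have hmin : Integrable (fun v => min v (v ^ 2)) μ := by
    refine ⟨(continuous_id.min (continuous_pow 2)).aestronglyMeasurable, ?_⟩
    rwa [hasFiniteIntegral_iff_ofReal (by
      filter_upwards [hμ] with v hv using le_min hv (by positivity))]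
  refine (hmin.const_mul (max β (β ^ 2))).mono'
    (continuous.comp (continuous_const_mul β)).aestronglyMeasurable ?_
  filter_upwards [hμ] with v hv
  rw [norm_of_nonneg (nonneg _)]
  exact mul_le hβ hv

end ExpNegRemainder

theorem MeasureTheory.integral_lt_integral_of_ae_lt {α : Type*} [MeasurableSpace α]
    {μ : Measure α} {f g : α → ℝ} (hμ : μ ≠ 0) (hf : Integrable f μ) (hg : Integrable g μ)
    (h : ∀ᵐ x ∂μ, f x < g x) : ∫ x, f x ∂μ < ∫ x, g x ∂μ := by
  rw [← sub_pos, ← integral_sub hg hf]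
  refine (integral_pos_iff_support_of_nonneg_ae ?_ (hg.sub hf)).2 ?_
  · filter_upwards [h] with x hx using sub_nonneg.2 hx.le
  · have hsupp : ∀ᵐ x ∂μ, x ∈ Function.support (g - f) := by
      filter_upwards [h] with x hx using sub_ne_zero.2 hx.ne'
    rw [pos_iff_ne_zero]
    intro hzero
    exact hμ (ae_eq_bot.1 (by
      simpa using hsupp.and (measure_eq_zero_iff_ae_notMem.1 hzero)))

/-- the two-sided bound (J_ρ(b₀)/b₀²)·b² < J_ρ(b) < (J_ρ(b₀)/b₀)·b
for every b₀ > 0 and b ∈ (0, b₀). -/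
theorem stmt_5
    (ρ : Measure ℝ)
    (hpos : 0 < ∫⁻ v in Set.Ioi (0:ℝ), ENNReal.ofReal (min v (v^2)) ∂ρ)
    (hfin : ∫⁻ v in Set.Ioi (0:ℝ), ENNReal.ofReal (min v (v^2)) ∂ρ < ⊤)
    (J : ℝ → ℝ)
    (hJ : ∀ b, J b = ∫ v in Set.Ioi (0:ℝ), (Real.exp (-(b*v)) - 1 + b*v) ∂ρ) :
    ∀ b₀ > (0:ℝ), ∀ b ∈ Set.Ioo (0:ℝ) b₀,
      J b₀ / b₀^2 * b^2 < J b ∧ J b < J b₀ / b₀ * b := by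
  intro b₀ hb₀ b hb
  set μ := ρ.restrict (Ioi 0)
  have hμ : μ ≠ 0 := by
    rintro hzero
    simp [μ, hzero] at hpos
  have hpos_ae : ∀ᵐ v ∂μ, 0 < v := ae_restrict_mem measurableSet_Ioi
  have hJφ : ∀ β, J β = ∫ v, φ (β * v) ∂μ := hJ
  have hs : b / b₀ ∈ Ioo 0 1 := ⟨div_pos hb.1 hb₀, (div_lt_one hb₀).2 hb.2⟩
  have hpointwise : ∀ᵐ v ∂μ, (b / b₀) ^ 2 * φ (b₀ * v) < φ (b * v) ∧
      φ (b * v) < b / b₀ * φ (b₀ * v) := by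
    filter_upwards [hpos_ae] with v hv
    have hscale : b / b₀ * (b₀ * v) = b * v := by field_simp
    simpa [hscale] using ExpNegRemainder.sq_mul_lt_mul hs (mul_pos hb₀ hv)
  have hnonneg_ae : ∀ᵐ v ∂μ, 0 ≤ v := hpos_ae.mono fun _ hv => hv.le
  have hIb := ExpNegRemainder.integrable_comp_mul hnonneg_ae hfin hb.1.le
  have hIb₀ := ExpNegRemainder.integrable_comp_mul hnonneg_ae hfin hb₀.le
  rw [hJφ, hJφ]
  constructor
  · calc (∫ v, φ (b₀ * v) ∂μ) / b₀ ^ 2 * b ^ 2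
          = ∫ v, (b / b₀) ^ 2 * φ (b₀ * v) ∂μ := by rw [integral_const_mul]; ring
      _ < ∫ v, φ (b * v) ∂μ := integral_lt_integral_of_ae_lt hμ (hIb₀.const_mul _) hIb
          (hpointwise.mono fun _ hv => hv.1)
  · calc ∫ v, φ (b * v) ∂μ < ∫ v, b / b₀ * φ (b₀ * v) ∂μ :=
          integral_lt_integral_of_ae_lt hμ hIb (hIb₀.const_mul _)
            (hpointwise.mono fun _ hv => hv.2)
      _ = (∫ v, φ (b₀ * v) ∂μ) / b₀ * b := by rw [integral_const_mul]; ring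
end

section
/- The function t ↦ (1 − e^{−t})·t / (e^{−t} − 1 + t) is strictly decreasing on (0,∞), tends to 2 as t → 0+ and tends to 1 as t → +∞. In particular, for every t > 0 one has the strict inequalities (e^{−t} − 1 + t) < (1 − e^{−t})·t < 2·(e^{−t} − 1 + t). -/
/-!
With `N t = (1 - e^{-t}) t`, `D t = e^{-t} - 1 + t` and `E t = 1 - e^{-t} = D' t`, one finds
`N' D - N D' = t² e^{-t} - E²`, which is negative for `t > 0` since it amounts to
`t < 2 sinh (t / 2)`; hence `N / D` is strictly decreasing. Near `0`, L'Hôpital's rule reduces the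
ratio to `N' / D' = 1 + e^{-t} t / E → 2`; at infinity `N / D = E / (1 - E / t) → 1`. A strictly
decreasing function lies strictly between its limits at the two ends of its interval, which gives
`1 < N / D < 2`.
-/

open Real Set Filter Topology

section StrictAntiOn

variable {α β : Type*} [LinearOrder α] [NoMaxOrder α] [LinearOrder β] [TopologicalSpace β]
  {f : α → β} {a t : α}

theorem StrictAntiOn.lt_of_tendsto_atTop [ClosedIicTopology β] {l : β}
    (hf : StrictAntiOn f (Ioi a)) (hl : Tendsto f atTop (𝓝 l)) (ht : a < t) : l < f t := by
  have : Nonempty α := ⟨a⟩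
  obtain ⟨s, hts⟩ := exists_gt t
  have hs : a < s := ht.trans hts
  have hle : l ≤ f s := le_of_tendsto hl <| by
    filter_upwards [eventually_gt_atTop s] with u hu using (hf hs (hs.trans hu) hu).le
  exact hle.trans_lt (hf ht hs hts)

theorem StrictAntiOn.lt_of_tendsto_nhdsGT [TopologicalSpace α] [OrderTopology α]
    [DenselyOrdered α] [ClosedIciTopology β] {L : β} (hf : StrictAntiOn f (Ioi a))
    (hL : Tendsto f (𝓝[>] a) (𝓝 L)) (ht : a < t) : f t < L := by
  obtain ⟨s, has, hst⟩ := exists_between ht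
  have hle : f s ≤ L := ge_of_tendsto hL <| by
    filter_upwards [Ioo_mem_nhdsGT has] with u hu using (hf hu.1 has hu.2).le
  exact (hf has ht hst).trans_le hle

end StrictAntiOn

theorem hasDerivAt_one_sub_exp_neg (t : ℝ) :
    HasDerivAt (fun t => 1 - exp (-t)) (exp (-t)) t := by
  simpa using (hasDerivAt_neg t).exp.const_sub 1

theorem hasDerivAt_one_sub_exp_neg_mul (t : ℝ) :
    HasDerivAt (fun t => (1 - exp (-t)) * t) (exp (-t) * t + (1 - exp (-t))) t := by
  simpa using (hasDerivAt_one_sub_exp_neg t).fun_mul (hasDerivAt_id' t)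

theorem hasDerivAt_exp_neg_sub_one_add (t : ℝ) :
    HasDerivAt (fun t => exp (-t) - 1 + t) (1 - exp (-t)) t :=
  ((hasDerivAt_neg t).exp.sub_const 1).fun_add (hasDerivAt_id' t) |>.congr_deriv (by ring)

theorem one_sub_exp_neg_pos {t : ℝ} (ht : 0 < t) : 0 < 1 - exp (-t) :=
  sub_pos.2 (exp_lt_one_iff.2 (neg_lt_zero.2 ht))

theorem exp_neg_sub_one_add_pos {t : ℝ} (ht : 0 < t) : 0 < exp (-t) - 1 + t := by
  linarith [add_one_lt_exp (neg_ne_zero.2 ht.ne')]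

theorem mul_exp_neg_half_lt_one_sub_exp_neg {t : ℝ} (ht : 0 < t) :
    t * exp (-(t / 2)) < 1 - exp (-t) := by
  have hsinh : t < exp (t / 2) - exp (-(t / 2)) := by
    have := self_lt_sinh_iff.2 (half_pos ht)
    rw [sinh_eq] at this
    linarith
  calc t * exp (-(t / 2)) < (exp (t / 2) - exp (-(t / 2))) * exp (-(t / 2)) :=
        mul_lt_mul_of_pos_right hsinh (exp_pos _)
    _ = 1 - exp (-t) := by
        rw [sub_mul, ← exp_add, ← exp_add, add_neg_cancel, exp_zero]
        ring_nf

theorem sq_mul_exp_neg_lt_sq_one_sub_exp_neg {t : ℝ} (ht : 0 < t) :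
    t ^ 2 * exp (-t) < (1 - exp (-t)) ^ 2 := by
  have hsq : t ^ 2 * exp (-t) = (t * exp (-(t / 2))) ^ 2 := by
    rw [mul_pow, ← exp_nat_mul]
    ring_nf
  rw [hsq]
  exact pow_lt_pow_left₀ (mul_exp_neg_half_lt_one_sub_exp_neg ht) (by positivity) two_ne_zero

theorem strictAntiOn_one_sub_exp_neg_mul_div :
    StrictAntiOn (fun t => (1 - exp (-t)) * t / (exp (-t) - 1 + t)) (Ioi 0) := by
  have hderiv : ∀ t ∈ Ioi (0 : ℝ),
      HasDerivAt (fun t => (1 - exp (-t)) * t / (exp (-t) - 1 + t))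
        ((t ^ 2 * exp (-t) - (1 - exp (-t)) ^ 2) / (exp (-t) - 1 + t) ^ 2) t := fun t ht =>
    ((hasDerivAt_one_sub_exp_neg_mul t).div (hasDerivAt_exp_neg_sub_one_add t)
      (exp_neg_sub_one_add_pos ht).ne').congr_deriv (by ring)
  refine strictAntiOn_of_deriv_neg (convex_Ioi 0)
    (fun t ht => (hderiv t ht).continuousAt.continuousWithinAt) fun t ht => ?_
  rw [interior_Ioi] at ht
  rw [(hderiv t ht).deriv]
  exact div_neg_of_neg_of_pos (sub_neg.2 (sq_mul_exp_neg_lt_sq_one_sub_exp_neg ht))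
    (pow_pos (exp_neg_sub_one_add_pos ht) 2)

theorem tendsto_div_one_sub_exp_neg_nhdsGT_zero :
    Tendsto (fun t => t / (1 - exp (-t))) (𝓝[>] 0) (𝓝 1) := by
  have h := (hasDerivAt_one_sub_exp_neg 0).tendsto_slope_zero_right
  simp only [zero_add, neg_zero, exp_zero, sub_self, sub_zero, smul_eq_mul] at h
  simpa [div_eq_mul_inv, mul_comm] using h.inv₀ one_ne_zero

theorem tendsto_one_sub_exp_neg_mul_div_nhdsGT_zero :
    Tendsto (fun t => (1 - exp (-t)) * t / (exp (-t) - 1 + t)) (𝓝[>] 0) (𝓝 2) := by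
  have hexp : Tendsto (fun t => exp (-t)) (𝓝[>] 0) (𝓝 1) := by
    simpa using (hasDerivAt_neg (0 : ℝ)).exp.continuousAt.tendsto.mono_left nhdsWithin_le_nhds
  have hderiv : Tendsto (fun t => (exp (-t) * t + (1 - exp (-t))) / (1 - exp (-t)))
      (𝓝[>] 0) (𝓝 2) := by
    have h := (hexp.mul tendsto_div_one_sub_exp_neg_nhdsGT_zero).add_const 1
    rw [one_mul, one_add_one_eq_two] at h
    refine h.congr' ?_
    filter_upwards [self_mem_nhdsWithin] with t ht
    have := (one_sub_exp_neg_pos ht).ne'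
    field_simp
  refine HasDerivAt.lhopital_zero_nhdsGT
    (.of_forall hasDerivAt_one_sub_exp_neg_mul) (.of_forall hasDerivAt_exp_neg_sub_one_add) ?_
    ?_ ?_ hderiv
  · filter_upwards [self_mem_nhdsWithin] with t ht using (one_sub_exp_neg_pos ht).ne'
  · simpa using (hasDerivAt_one_sub_exp_neg_mul 0).continuousAt.tendsto.mono_left
      nhdsWithin_le_nhds
  · simpa using (hasDerivAt_exp_neg_sub_one_add 0).continuousAt.tendsto.mono_left
      nhdsWithin_le_nhds

theorem tendsto_one_sub_exp_neg_mul_div_atTop :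
    Tendsto (fun t => (1 - exp (-t)) * t / (exp (-t) - 1 + t)) atTop (𝓝 1) := by
  have hE : Tendsto (fun t => 1 - exp (-t)) atTop (𝓝 1) := by
    simpa using tendsto_exp_neg_atTop_nhds_zero.const_sub 1
  have h : Tendsto (fun t => (1 - exp (-t)) / (1 - (1 - exp (-t)) / t)) atTop
      (𝓝 (1 / (1 - 0))) :=
    hE.div ((hE.div_atTop tendsto_id).const_sub 1) (by norm_num)
  rw [sub_zero, div_one] at h
  refine h.congr' ?_
  filter_upwards [eventually_gt_atTop 0] with t ht
  have hD : 1 - (1 - exp (-t)) / t = (exp (-t) - 1 + t) / t := by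
    field_simp
    ring
  rw [hD, div_div_eq_mul_div]

/-- the function t ↦ (1 − e^{−t})t / (e^{−t} − 1 + t) is strictly
decreasing on (0,∞), tends to 2 at 0+ and to 1 at +∞; in particular
(e^{−t} − 1 + t) < (1 − e^{−t})t < 2(e^{−t} − 1 + t) for t > 0. -/
theorem stmt_6 :
    StrictAntiOn (fun t => (1 - Real.exp (-t)) * t / (Real.exp (-t) - 1 + t)) (Set.Ioi 0) ∧
    Filter.Tendsto (fun t => (1 - Real.exp (-t)) * t / (Real.exp (-t) - 1 + t))
      (nhdsWithin 0 (Set.Ioi 0)) (nhds 2) ∧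
    Filter.Tendsto (fun t => (1 - Real.exp (-t)) * t / (Real.exp (-t) - 1 + t))
      Filter.atTop (nhds 1) ∧
    ∀ t > (0:ℝ),
      Real.exp (-t) - 1 + t < (1 - Real.exp (-t)) * t ∧
      (1 - Real.exp (-t)) * t < 2 * (Real.exp (-t) - 1 + t) := by
  have hanti := strictAntiOn_one_sub_exp_neg_mul_div
  have hzero := tendsto_one_sub_exp_neg_mul_div_nhdsGT_zero
  have htop := tendsto_one_sub_exp_neg_mul_div_atTop
  refine ⟨hanti, hzero, htop, fun t ht => ?_⟩
  have hD := exp_neg_sub_one_add_pos ht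
  have hlower := hanti.lt_of_tendsto_atTop htop ht
  have hupper := hanti.lt_of_tendsto_nhdsGT hzero ht
  exact ⟨by simpa using (lt_div_iff₀ hD).1 hlower, (div_lt_iff₀ hD).1 hupper⟩
end

section
/- Let 1 < p < α < 2 and x > 0. Then ∫₀^∞ ((x+v)^p − x^p − p x^{p−1} v) v^{−1−α} dv = c_{α,p} · x^{p−α}, where c_{α,p} := (Γ(2−α)/(α(α−1))) · (p(p−1)/Γ(2−p)) · Γ(α−p). In particular, ∫₀^∞ ((1+u)^p − 1 − p u) u^{−1−α} du = c_{α,p}. -/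
/-!
Write `g(u) = (1+u)^p - 1 - p u`. Integrating by parts twice against `u^{-α}` gives
`α (α-1) ∫ g(u) u^{-1-α} du = ∫ g''(u) u^{1-α} du = p (p-1) ∫ (1+u)^{p-2} u^{1-α} du`;
the boundary terms vanish because `g(u) = O(u^2)`, `g'(u) = O(u)` at `0` and
`g(u) = O(u^p)`, `g'(u) = O(u^{p-1})` at `∞`, and `p < α < 2`. The last integral is the Beta
integral `B(2-α, α-p)`. The case of general `x` reduces to `x = 1` by substituting `v = x u`.
-/

open MeasureTheory Real Set Filter Topology

theorem integral_rpow_mul_one_sub_rpow {s t : ℝ} (hs : 0 < s) (ht : 0 < t) :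
    ∫ y in (0:ℝ)..1, y ^ (s - 1) * (1 - y) ^ (t - 1) = Gamma s * Gamma t / Gamma (s + t) := by
  have h := Complex.betaIntegral_eq_Gamma_mul_div s t (by simpa) (by simpa)
  rw [Complex.betaIntegral, ← Complex.ofReal_add, Complex.Gamma_ofReal, Complex.Gamma_ofReal,
    Complex.Gamma_ofReal] at h
  rw [← Complex.ofReal_inj, ← intervalIntegral.integral_ofReal]
  push_cast [← h]
  refine intervalIntegral.integral_congr fun y hy => ?_
  rw [uIcc_of_le zero_le_one] at hy
  push_cast [Complex.ofReal_cpow hy.1, Complex.ofReal_cpow (sub_nonneg.2 hy.2)]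
  rfl

theorem integral_Ioi_rpow_mul_one_add_rpow {s t : ℝ} (hs : 0 < s) (ht : 0 < t) :
    ∫ u in Ioi 0, u ^ (s - 1) * (1 + u) ^ (-(s + t)) = Gamma s * Gamma t / Gamma (s + t) := by
  have himg : (fun y : ℝ => y / (1 - y)) '' Ioo 0 1 = Ioi 0 := by
    ext u
    refine ⟨fun ⟨y, ⟨hy0, hy1⟩, hyu⟩ => hyu ▸ div_pos hy0 (sub_pos.2 hy1), fun hu => ?_⟩
    have hu : 0 < u := hu
    refine ⟨u / (1 + u), ⟨by positivity, (div_lt_one (by positivity)).2 (by linarith)⟩, ?_⟩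
    field_simp
    ring
  have hderiv : ∀ y ∈ Ioo (0:ℝ) 1,
      HasDerivWithinAt (fun y : ℝ => y / (1 - y)) ((1 - y) ^ 2)⁻¹ (Ioo 0 1) y := by
    intro y hy
    have h1 : 1 - y ≠ 0 := (sub_pos.2 hy.2).ne'
    exact (((hasDerivAt_id y).div ((hasDerivAt_id y).const_sub 1) h1).congr_deriv
      (by simp only [id_eq]; field_simp; ring)).hasDerivWithinAt
  have hinj : InjOn (fun y : ℝ => y / (1 - y)) (Ioo 0 1) := by
    intro a ha b hb hab
    have h1 : 1 - a ≠ 0 := (sub_pos.2 ha.2).ne'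
    have h2 : 1 - b ≠ 0 := (sub_pos.2 hb.2).ne'
    field_simp at hab
    linarith
  rw [← himg, integral_image_eq_integral_abs_deriv_smul measurableSet_Ioo hderiv hinj,
    ← integral_rpow_mul_one_sub_rpow hs ht, intervalIntegral.integral_of_le zero_le_one,
    integral_Ioc_eq_integral_Ioo]
  refine setIntegral_congr_fun measurableSet_Ioo fun y ⟨hy0, hy1⟩ => ?_
  have h1 : 0 < 1 - y := sub_pos.2 hy1
  have e1 : 1 + y / (1 - y) = (1 - y)⁻¹ := by field_simp; ring
  have e2 : (1 - y) ^ (t - 1) = (1 - y) ^ (s + t) / (1 - y) ^ (s - 1) / (1 - y) ^ (2:ℝ) := by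
    rw [← rpow_sub h1, ← rpow_sub h1]
    ring_nf
  rw [smul_eq_mul, abs_of_pos (by positivity), e1, div_rpow hy0.le h1.le, inv_rpow h1.le,
    rpow_neg h1.le, inv_inv, e2, rpow_two]
  field_simp

section PowerBounds

variable {f : ℝ → ℝ} {a b C D s : ℝ}

lemma abs_mul_rpow_le {u : ℝ} (hu : 0 < u) (hf : |f u| ≤ C * u ^ a) :
    |f u * u ^ s| ≤ C * u ^ (a + s) := by
  rw [abs_mul, abs_of_pos (rpow_pos_of_pos hu s), rpow_add hu, ← mul_assoc]
  exact mul_le_mul_of_nonneg_right hf (rpow_nonneg hu.le s)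

lemma integrableOn_Ioi_mul_rpow (hfc : ContinuousOn f (Ioi 0))
    (hf0 : ∀ u ∈ Ioc 0 1, |f u| ≤ C * u ^ a) (hf1 : ∀ u ∈ Ioi 1, |f u| ≤ D * u ^ b)
    (ha : -1 < a + s) (hb : b + s < -1) : IntegrableOn (fun u => f u * u ^ s) (Ioi 0) := by
  have hc : ContinuousOn (fun u => f u * u ^ s) (Ioi 0) :=
    hfc.mul (continuousOn_id.rpow_const fun u hu => Or.inl (ne_of_gt hu))
  rw [← Ioc_union_Ioi_eq_Ioi zero_le_one, integrableOn_union]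
  constructor
  · refine Integrable.mono' ((intervalIntegrable_iff_integrableOn_Ioc_of_le zero_le_one).1
      ((intervalIntegral.intervalIntegrable_rpow' ha).const_mul C))
      ((hc.mono Ioc_subset_Ioi_self).aestronglyMeasurable measurableSet_Ioc) ?_
    exact (ae_restrict_iff' measurableSet_Ioc).2 (ae_of_all _ fun u hu =>
      abs_mul_rpow_le hu.1 (hf0 u hu))
  · refine Integrable.mono' ((integrableOn_Ioi_rpow_of_lt hb zero_lt_one).const_mul D)
      ((hc.mono (Ioi_subset_Ioi zero_le_one)).aestronglyMeasurable measurableSet_Ioi) ?_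
    exact (ae_restrict_iff' measurableSet_Ioi).2 (ae_of_all _ fun u hu =>
      abs_mul_rpow_le (zero_lt_one.trans hu) (hf1 u hu))

lemma tendsto_mul_rpow_nhdsGT_zero (hf0 : ∀ u ∈ Ioc 0 1, |f u| ≤ C * u ^ a) (ha : 0 < a + s) :
    Tendsto (fun u => f u * u ^ s) (𝓝[>] 0) (𝓝 0) := by
  have hlim : Tendsto (fun u : ℝ => C * u ^ (a + s)) (𝓝[>] 0) (𝓝 0) := by
    have h := (continuousAt_rpow_const 0 _ (Or.inr ha.le)).tendsto.mono_left
      (nhdsWithin_le_nhds (s := Ioi 0))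
    simpa [zero_rpow ha.ne'] using h.const_mul C
  refine squeeze_zero_norm' ?_ hlim
  filter_upwards [Ioc_mem_nhdsGT zero_lt_one] with u hu
  exact abs_mul_rpow_le hu.1 (hf0 u hu)

lemma tendsto_mul_rpow_atTop (hf1 : ∀ u ∈ Ioi 1, |f u| ≤ D * u ^ b) (hb : b + s < 0) :
    Tendsto (fun u => f u * u ^ s) atTop (𝓝 0) := by
  have hlim : Tendsto (fun u : ℝ => D * u ^ (b + s)) atTop (𝓝 0) := by
    simpa using (tendsto_rpow_neg_atTop (neg_pos.2 hb)).const_mul D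
  refine squeeze_zero_norm' ?_ hlim
  filter_upwards [eventually_gt_atTop 1] with u hu
  exact abs_mul_rpow_le (zero_lt_one.trans hu) (hf1 u hu)

end PowerBounds

theorem integral_deriv_mul_rpow_neg {f f' : ℝ → ℝ} {β a b a' b' C D C' D' : ℝ}
    (hf : ∀ u ∈ Ioi 0, HasDerivAt f (f' u) u) (hf'c : ContinuousOn f' (Ioi 0))
    (hf0 : ∀ u ∈ Ioc 0 1, |f u| ≤ C * u ^ a) (hf1 : ∀ u ∈ Ioi 1, |f u| ≤ D * u ^ b)
    (hf'0 : ∀ u ∈ Ioc 0 1, |f' u| ≤ C' * u ^ a') (hf'1 : ∀ u ∈ Ioi 1, |f' u| ≤ D' * u ^ b')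
    (ha : β < a) (hb : b < β) (ha' : β - 1 < a') (hb' : b' < β - 1) :
    ∫ u in Ioi 0, f' u * u ^ (-β) = β * ∫ u in Ioi 0, f u * u ^ (-1 - β) := by
  have hfc : ContinuousOn f (Ioi 0) := HasDerivAt.continuousOn hf
  have hw : ∀ u ∈ Ioi (0:ℝ), HasDerivAt (fun u => u ^ (-β)) (-β * u ^ (-1 - β)) u :=
    fun u hu => by
      simpa [show -β - 1 = -1 - β by ring] using
        hasDerivAt_rpow_const (p := -β) (Or.inl (ne_of_gt hu))
  have hint := integrableOn_Ioi_mul_rpow (s := -1 - β) hfc hf0 hf1 (by linarith) (by linarith)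
  have ibp := integral_Ioi_mul_deriv_eq_deriv_mul hf hw
    (by simpa only [IntegrableOn, Pi.mul_def, mul_left_comm] using hint.const_mul (-β))
    (integrableOn_Ioi_mul_rpow hf'c hf'0 hf'1 (by linarith) (by linarith))
    (tendsto_mul_rpow_nhdsGT_zero hf0 (by linarith)) (tendsto_mul_rpow_atTop hf1 (by linarith))
  simp only [mul_left_comm _ (-β), integral_const_mul] at ibp
  linarith

section OneAddRpow

variable {p u : ℝ}

lemma hasDerivAt_one_add_rpow_sub_one_sub_mul (hu : -1 < u) :
    HasDerivAt (fun w => (1 + w) ^ p - 1 - p * w) (p * (1 + u) ^ (p - 1) - p) u := by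
  have h := ((hasDerivAt_id' u).const_add 1).rpow_const (p := p) (Or.inl (by linarith))
  simpa using (h.sub_const 1).fun_sub ((hasDerivAt_id' u).const_mul p)

lemma hasDerivAt_mul_one_add_rpow_sub (hu : -1 < u) :
    HasDerivAt (fun w => p * (1 + w) ^ (p - 1) - p) (p * (p - 1) * (1 + u) ^ (p - 2)) u := by
  have h := ((hasDerivAt_id' u).const_add 1).rpow_const (p := p - 1) (Or.inl (by linarith))
  refine ((h.const_mul p).sub_const p).congr_deriv ?_
  rw [sub_sub, one_add_one_eq_two]
  ring

lemma one_add_rpow_le_two_rpow_mul_rpow (hp : 0 ≤ p) (hu : 1 ≤ u) :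
    (1 + u) ^ p ≤ 2 ^ p * u ^ p := by
  rw [← mul_rpow zero_le_two (by linarith)]
  exact rpow_le_rpow (by linarith) (by linarith) hp

lemma one_add_rpow_sub_one_sub_mul_nonneg (hp : 1 ≤ p) (hu : -1 ≤ u) :
    0 ≤ (1 + u) ^ p - 1 - p * u := by
  linarith [one_add_mul_self_le_rpow_one_add hu hp]

lemma abs_one_add_rpow_sub_one_sub_mul_le_sq (hp1 : 1 ≤ p) (hp2 : p ≤ 2) (hu : 0 ≤ u) :
    |(1 + u) ^ p - 1 - p * u| ≤ (p - 1) * u ^ 2 := by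
  have hB : (1 + u) ^ (p - 1) ≤ 1 + (p - 1) * u :=
    rpow_one_add_le_one_add_mul_self (by linarith) (by linarith) (by linarith)
  have hsplit : (1 + u) ^ p = (1 + u) * (1 + u) ^ (p - 1) := by
    rw [rpow_sub_one (by positivity), mul_div_cancel₀ _ (by positivity)]
  rw [abs_of_nonneg (one_add_rpow_sub_one_sub_mul_nonneg hp1 (by linarith)), hsplit]
  nlinarith

lemma abs_one_add_rpow_sub_one_sub_mul_le_rpow (hp : 1 ≤ p) (hu : 1 ≤ u) :
    |(1 + u) ^ p - 1 - p * u| ≤ 2 ^ p * u ^ p := by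
  rw [abs_of_nonneg (one_add_rpow_sub_one_sub_mul_nonneg hp (by linarith))]
  nlinarith [one_add_rpow_le_two_rpow_mul_rpow (by linarith : 0 ≤ p) hu]

lemma mul_one_add_rpow_sub_nonneg (hp : 1 ≤ p) (hu : 0 ≤ u) : 0 ≤ p * (1 + u) ^ (p - 1) - p := by
  nlinarith [one_le_rpow (by linarith : 1 ≤ 1 + u) (by linarith : 0 ≤ p - 1)]

lemma abs_mul_one_add_rpow_sub_le_mul (hp1 : 1 ≤ p) (hp2 : p ≤ 2) (hu : 0 ≤ u) :
    |p * (1 + u) ^ (p - 1) - p| ≤ p * (p - 1) * u := by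
  rw [abs_of_nonneg (mul_one_add_rpow_sub_nonneg hp1 hu)]
  nlinarith [rpow_one_add_le_one_add_mul_self (by linarith : -1 ≤ u) (by linarith : 0 ≤ p - 1)
    (by linarith : p - 1 ≤ 1)]

lemma abs_mul_one_add_rpow_sub_le_rpow (hp : 1 ≤ p) (hu : 1 ≤ u) :
    |p * (1 + u) ^ (p - 1) - p| ≤ p * 2 ^ (p - 1) * u ^ (p - 1) := by
  rw [abs_of_nonneg (mul_one_add_rpow_sub_nonneg hp (by linarith))]
  nlinarith [one_add_rpow_le_two_rpow_mul_rpow (by linarith : 0 ≤ p - 1) hu]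

lemma abs_mul_one_add_rpow_le_of_nonpos {c q : ℝ} (hc : 0 ≤ c) (hq : q ≤ 0) (hu : 0 ≤ u) :
    |c * (1 + u) ^ q| ≤ c := by
  rw [abs_of_nonneg (by positivity)]
  exact mul_le_of_le_one_right hc (rpow_le_one_of_one_le_of_nonpos (by linarith) hq)

lemma abs_mul_one_add_rpow_le_mul_rpow {c q : ℝ} (hc : 0 ≤ c) (hq : q ≤ 0) (hu : 0 < u) :
    |c * (1 + u) ^ q| ≤ c * u ^ q := by
  rw [abs_of_nonneg (by positivity)]
  exact mul_le_mul_of_nonneg_left (rpow_le_rpow_of_nonpos hu (by linarith) hq) hc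

end OneAddRpow

section TaylorRemainder

variable {p α : ℝ}

theorem integral_Ioi_mul_one_add_rpow_sub_mul_rpow (hp : 1 ≤ p) (hpα : p < α) (hα : α < 2) :
    ∫ u in Ioi 0, (p * (1 + u) ^ (p - 1) - p) * u ^ (-α) =
      α * ∫ u in Ioi 0, ((1 + u) ^ p - 1 - p * u) * u ^ (-1 - α) :=
  integral_deriv_mul_rpow_neg (a := 2) (a' := 1)
    (fun u hu => hasDerivAt_one_add_rpow_sub_one_sub_mul (by linarith [mem_Ioi.1 hu]))
    (HasDerivAt.continuousOn fun u hu =>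
      hasDerivAt_mul_one_add_rpow_sub (by linarith [mem_Ioi.1 hu]))
    (fun u hu => by simpa using abs_one_add_rpow_sub_one_sub_mul_le_sq hp (by linarith) hu.1.le)
    (fun u hu => abs_one_add_rpow_sub_one_sub_mul_le_rpow hp hu.le)
    (fun u hu => by simpa using abs_mul_one_add_rpow_sub_le_mul hp (by linarith) hu.1.le)
    (fun u hu => abs_mul_one_add_rpow_sub_le_rpow hp hu.le)
    hα hpα (by linarith) (by linarith)

theorem integral_Ioi_mul_mul_one_add_rpow_mul_rpow (hp : 1 ≤ p) (hpα : p < α) (hα : α < 2) :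
    ∫ u in Ioi 0, p * (p - 1) * (1 + u) ^ (p - 2) * u ^ (1 - α) =
      (α - 1) * ∫ u in Ioi 0, (p * (1 + u) ^ (p - 1) - p) * u ^ (-α) := by
  have hpp : 0 ≤ p * (p - 1) := by nlinarith
  have hc : ContinuousOn (fun u => p * (p - 1) * (1 + u) ^ (p - 2)) (Ioi 0) :=
    continuousOn_const.mul <| (continuousOn_const.add continuousOn_id).rpow_const fun u hu =>
      Or.inl (by simp at hu ⊢; linarith)
  have h := integral_deriv_mul_rpow_neg (β := α - 1) (a := 1) (a' := 0)
    (fun u hu => hasDerivAt_mul_one_add_rpow_sub (by linarith [mem_Ioi.1 hu])) hc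
    (fun u hu => by simpa using abs_mul_one_add_rpow_sub_le_mul hp (by linarith) hu.1.le)
    (fun u hu => abs_mul_one_add_rpow_sub_le_rpow hp hu.le)
    (fun u hu => by simpa using abs_mul_one_add_rpow_le_of_nonpos hpp (by linarith) hu.1.le)
    (fun u hu => abs_mul_one_add_rpow_le_mul_rpow hpp (by linarith) (zero_lt_one.trans hu))
    (by linarith) (by linarith) (by linarith) (by linarith)
  rwa [neg_sub, show -1 - (α - 1) = -α by ring] at h

theorem integral_Ioi_mul_mul_one_add_rpow_mul_rpow_eq_Gamma (hpα : p < α) (hα : α < 2) :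
    ∫ u in Ioi 0, p * (p - 1) * (1 + u) ^ (p - 2) * u ^ (1 - α) =
      p * (p - 1) * (Gamma (2 - α) * Gamma (α - p) / Gamma (2 - p)) := by
  have h := integral_Ioi_rpow_mul_one_add_rpow (s := 2 - α) (t := α - p) (by linarith)
    (by linarith)
  rw [show 2 - α + (α - p) = 2 - p by ring] at h
  rw [← h, ← integral_const_mul]
  refine setIntegral_congr_fun measurableSet_Ioi fun u _ => ?_
  rw [show 2 - α - 1 = 1 - α by ring, show -(2 - p) = p - 2 by ring]
  ring

theorem integral_Ioi_one_add_rpow_sub_one_sub_mul_mul_rpow (hp : 1 ≤ p) (hpα : p < α) (hα : α < 2) :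
    ∫ u in Ioi 0, ((1 + u) ^ p - 1 - p * u) * u ^ (-1 - α) =
      Gamma (2 - α) / (α * (α - 1)) * (p * (p - 1) / Gamma (2 - p)) * Gamma (α - p) := by
  have h := integral_Ioi_mul_mul_one_add_rpow_mul_rpow_eq_Gamma hpα hα
  rw [integral_Ioi_mul_mul_one_add_rpow_mul_rpow hp hpα hα,
    integral_Ioi_mul_one_add_rpow_sub_mul_rpow hp hpα hα] at h
  have hΓ : Gamma (2 - p) ≠ 0 := (Gamma_pos_of_pos (by linarith)).ne'
  have hα0 : α ≠ 0 := by linarith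
  have hα1 : α - 1 ≠ 0 := by linarith
  generalize ∫ u in Ioi 0, ((1 + u) ^ p - 1 - p * u) * u ^ (-1 - α) = I at h ⊢
  field_simp at h ⊢
  linear_combination h

end TaylorRemainder

lemma add_rpow_sub_rpow_sub_mul_eq {p x v : ℝ} (hx : 0 < x) (hxv : 0 ≤ x + v) :
    (x + v) ^ p - x ^ p - p * x ^ (p - 1) * v = x ^ p * ((1 + v / x) ^ p - 1 - p * (v / x)) := by
  have h : 1 + v / x = (x + v) / x := by field_simp
  rw [h, div_rpow hxv hx.le, rpow_sub_one hx.ne']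
  field_simp

theorem integral_Ioi_comp_div_mul_rpow (f : ℝ → ℝ) (s : ℝ) {x : ℝ} (hx : 0 < x) :
    ∫ v in Ioi 0, f (v / x) * v ^ s = x ^ (s + 1) * ∫ u in Ioi 0, f u * u ^ s := by
  have h : ∀ v ∈ Ioi (0:ℝ), f (v / x) * v ^ s = x ^ s * (f (v * x⁻¹) * (v * x⁻¹) ^ s) := by
    intro v hv
    rw [mul_rpow (le_of_lt hv) (inv_nonneg.2 hx.le), inv_rpow hx.le, ← div_eq_mul_inv]
    field_simp
  rw [setIntegral_congr_fun measurableSet_Ioi h, integral_const_mul,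
    integral_comp_mul_right_Ioi (fun u => f u * u ^ s) 0 (inv_pos.2 hx), zero_mul, inv_inv,
    smul_eq_mul, rpow_add_one hx.ne']
  ring

/-- for 1 < p < α < 2 and x > 0,
∫₀^∞ ((x+v)^p − x^p − p x^{p−1} v) v^{−1−α} dv = c_{α,p} x^{p−α}, where
c_{α,p} = (Γ(2−α)/(α(α−1)))(p(p−1)/Γ(2−p))Γ(α−p); in particular the u-integral
equals c_{α,p}. -/
theorem stmt_8 (p α : ℝ) (hp : 1 < p) (hpα : p < α) (hα : α < 2) (x : ℝ) (hx : 0 < x) :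
    (∫ v in Set.Ioi (0:ℝ), ((x+v)^p - x^p - p * x^(p-1) * v) * v^(-1-α)) =
      (Real.Gamma (2-α) / (α*(α-1)) * (p*(p-1) / Real.Gamma (2-p)) * Real.Gamma (α-p))
        * x^(p-α) ∧
    (∫ u in Set.Ioi (0:ℝ), ((1+u)^p - 1 - p*u) * u^(-1-α)) =
      Real.Gamma (2-α) / (α*(α-1)) * (p*(p-1) / Real.Gamma (2-p)) * Real.Gamma (α-p) := by
  have hI := integral_Ioi_one_add_rpow_sub_one_sub_mul_mul_rpow hp.le hpα hα
  refine ⟨?_, hI⟩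
  calc ∫ v in Ioi 0, ((x + v) ^ p - x ^ p - p * x ^ (p - 1) * v) * v ^ (-1 - α)
      = ∫ v in Ioi 0, x ^ p * (((1 + v / x) ^ p - 1 - p * (v / x)) * v ^ (-1 - α)) :=
        setIntegral_congr_fun measurableSet_Ioi fun v hv => by
          rw [add_rpow_sub_rpow_sub_mul_eq hx (by linarith [mem_Ioi.1 hv]), mul_assoc]
    _ = x ^ p * x ^ (-1 - α + 1) * ∫ u in Ioi 0, ((1 + u) ^ p - 1 - p * u) * u ^ (-1 - α) := by
        rw [integral_const_mul, mul_assoc,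
          integral_Ioi_comp_div_mul_rpow (fun u => (1 + u) ^ p - 1 - p * u) _ hx]
    _ = _ := by
        rw [hI, ← rpow_add hx, show p + (-1 - α + 1) = p - α by ring]
        ring
end

section
/- Let b > 0, let g ≥ 1 be an integer, let η_1,…,η_g > 0 and let 2 ≥ α_1 > α_2 > … > α_g with α_g ∈ (1,2). Then, as u → 0+, 1 − exp(−∫₀^u b/(Σ_{k=1}^g η_k λ^{α_k−1}) dλ) is asymptotically equivalent to (b/(η_g(2−α_g))) · u^{2−α_g}, i.e. the ratio of the two quantities tends to 1 as u → 0+. -/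
/-!
Near `0` the term with the smallest exponent `α_g` dominates `Σ η_k λ^(α_k - 1)`, so the
integrand is asymptotically equivalent to `(b / η_g) λ^(1 - α_g)`, which is integrable at `0`
because `α_g < 2`. Asymptotic equivalence with a nonnegative integrable function survives
integration from `0`, so the integral `I(u)` is equivalent to
`(b / (η_g (2 - α_g))) u^(2 - α_g)`; in particular `I(u) → 0`, and `1 - exp (-I(u)) ~ I(u)`
because `1 - exp (-x) ~ x` at `0`.
-/

open Real Set Filter intervalIntegral
open Asymptotics Topology MeasureTheory

theorem eventually_forall_Ioc_nhdsGT {α : Type*} [LinearOrder α] [TopologicalSpace α]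
    [OrderTopology α] [NoMaxOrder α] [DenselyOrdered α] {a : α} {p : α → Prop}
    (h : ∀ᶠ x in 𝓝[>] a, p x) : ∀ᶠ u in 𝓝[>] a, ∀ x ∈ Ioc a u, p x := by
  obtain ⟨δ, hδ, hsub⟩ := mem_nhdsGT_iff_exists_Ioc_subset.1 h
  filter_upwards [Ioc_mem_nhdsGT hδ] with u hu x hx using hsub ⟨hx.1, hx.2.trans hu.2⟩

theorem isLittleO_rpow_rpow_nhdsGT_zero {p q : ℝ} (hpq : p < q) :
    (fun x : ℝ => x ^ q) =o[𝓝[>] 0] fun x => x ^ p := by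
  have hlim : Tendsto (fun x : ℝ => x ^ (q - p)) (𝓝[>] 0) (𝓝 0) :=
    (tendsto_nhdsWithin_of_tendsto_nhds tendsto_id).rpow_const_nhds_zero (sub_pos.2 hpq)
  refine (((isLittleO_one_iff ℝ).2 hlim).mul_isBigO
    (isBigO_refl (fun x : ℝ => x ^ p) _)).congr' ?_ ?_
  · filter_upwards [self_mem_nhdsWithin] with x hx
    rw [← Real.rpow_add hx, sub_add_cancel]
  · exact .of_forall fun x => one_mul _

theorem isEquivalent_sum_rpow_nhdsGT_zero {ι : Type*} {s : Finset ι} {c p : ι → ℝ} {j : ι}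
    (hj : j ∈ s) (hcj : c j ≠ 0) (hp : ∀ k ∈ s, k ≠ j → p j < p k) :
    (fun x : ℝ => ∑ k ∈ s, c k * x ^ p k) ~[𝓝[>] 0] fun x => c j * x ^ p j := by
  classical
  have hrest : (fun x : ℝ => ∑ k ∈ s.erase j, c k * x ^ p k) =o[𝓝[>] 0]
      fun x => c j * x ^ p j :=
    IsLittleO.fun_sum fun k hk => ((isLittleO_rpow_rpow_nhdsGT_zero
      (hp k (Finset.mem_of_mem_erase hk) (Finset.ne_of_mem_erase hk))).const_mul_left
        (c k)).const_mul_right hcj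
  refine (IsEquivalent.refl.add_isLittleO hrest).congr_left (.of_forall fun x => ?_)
  exact Finset.add_sum_erase s (fun k => c k * x ^ p k) hj

theorem isEquivalent_one_sub_exp_neg : (fun x : ℝ => 1 - exp (-x)) ~[𝓝 0] id := by
  have h : HasDerivAt (fun x : ℝ => 1 - exp (-x)) 1 0 := by
    simpa using ((Real.hasDerivAt_exp (-0)).comp (0 : ℝ) (hasDerivAt_neg 0)).const_sub 1
  simpa using! h.isLittleO

namespace Asymptotics

theorem IsEquivalent.eventually_intervalIntegrable_nhdsGT {f g : ℝ → ℝ} {a : ℝ}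
    (hfg : f ~[𝓝[>] a] g) (hfm : AEStronglyMeasurable f)
    (hg : ∀ᶠ x in 𝓝[>] a, 0 ≤ g x)
    (hgi : ∀ᶠ u in 𝓝[>] a, IntervalIntegrable g volume a u) :
    ∀ᶠ u in 𝓝[>] a, IntervalIntegrable f volume a u := by
  obtain ⟨C, hC⟩ := hfg.isBigO.bound
  filter_upwards [eventually_forall_Ioc_nhdsGT (hC.and hg), hgi, self_mem_nhdsWithin]
    with u hu hgu hau
  refine (hgu.const_mul C).mono_fun' hfm.restrict ?_
  rw [uIoc_of_le (le_of_lt hau)]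
  filter_upwards [ae_restrict_mem measurableSet_Ioc] with x hx
  simpa [abs_of_nonneg (hu x hx).2] using (hu x hx).1

theorem IsEquivalent.integral_nhdsGT {f g : ℝ → ℝ} {a : ℝ} (hfg : f ~[𝓝[>] a] g)
    (hg : ∀ᶠ x in 𝓝[>] a, 0 ≤ g x)
    (hfi : ∀ᶠ u in 𝓝[>] a, IntervalIntegrable f volume a u)
    (hgi : ∀ᶠ u in 𝓝[>] a, IntervalIntegrable g volume a u) :
    (fun u => ∫ x in a..u, f x) ~[𝓝[>] a] fun u => ∫ x in a..u, g x := by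
  refine IsLittleO.isEquivalent (isLittleO_iff.2 fun ε hε => ?_)
  filter_upwards [eventually_forall_Ioc_nhdsGT ((hfg.isLittleO.def hε).and hg), hfi, hgi,
    self_mem_nhdsWithin] with u hu hfu hgu hau
  calc ‖(∫ x in a..u, f x) - ∫ x in a..u, g x‖ = ‖∫ x in a..u, (f x - g x)‖ := by
        rw [integral_sub hfu hgu]
    _ ≤ ∫ x in a..u, ε * g x := by
        refine norm_integral_le_of_norm_le (le_of_lt hau) (.of_forall fun x hx => ?_)
          (hgu.const_mul ε)
        simpa [Real.norm_of_nonneg (hu x hx).2] using (hu x hx).1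
    _ ≤ ε * ‖∫ x in a..u, g x‖ := by
        rw [intervalIntegral.integral_const_mul]
        exact mul_le_mul_of_nonneg_left (Real.le_norm_self _) hε.le

end Asymptotics

theorem isEquivalent_div_sum_rpow_nhdsGT_zero {ι : Type*} [Fintype ι] (b : ℝ)
    {η α : ι → ℝ} {j : ι} (hηj : η j ≠ 0) (hmin : ∀ k, k ≠ j → α j < α k) :
    (fun l : ℝ => b / ∑ k, η k * l ^ (α k - 1)) ~[𝓝[>] 0]
      fun l => b / η j * l ^ (1 - α j) := by
  have hsum := isEquivalent_sum_rpow_nhdsGT_zero (p := fun k => α k - 1)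
    (Finset.mem_univ j) hηj fun k _ hk => sub_lt_sub_right (hmin k hk) 1
  refine ((IsEquivalent.refl (u := fun _ : ℝ => b)).div hsum).congr_right ?_
  filter_upwards [self_mem_nhdsWithin] with l hl
  rw [Pi.div_apply, show 1 - α j = -(α j - 1) by ring, Real.rpow_neg (le_of_lt hl)]
  field_simp

theorem isEquivalent_integral_div_sum_rpow_nhdsGT_zero {ι : Type*} [Fintype ι] {b : ℝ}
    (hb : 0 ≤ b) {η α : ι → ℝ} {j : ι} (hηj : 0 < η j) (hαj : α j < 2)
    (hmin : ∀ k, k ≠ j → α j < α k) :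
    (fun u => ∫ l in (0:ℝ)..u, b / ∑ k, η k * l ^ (α k - 1)) ~[𝓝[>] 0]
      fun u => b / (η j * (2 - α j)) * u ^ (2 - α j) := by
  have hf := isEquivalent_div_sum_rpow_nhdsGT_zero b hηj.ne' hmin
  have hg : ∀ᶠ l in 𝓝[>] (0 : ℝ), 0 ≤ b / η j * l ^ (1 - α j) := by
    filter_upwards [self_mem_nhdsWithin] with l hl
    exact mul_nonneg (div_nonneg hb hηj.le) (Real.rpow_nonneg (le_of_lt hl) _)
  have hgi : ∀ᶠ u in 𝓝[>] (0 : ℝ),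
      IntervalIntegrable (fun l => b / η j * l ^ (1 - α j)) volume 0 u :=
    .of_forall fun u => (intervalIntegrable_rpow' (by linarith)).const_mul _
  have hfm : AEStronglyMeasurable fun l : ℝ => b / ∑ k, η k * l ^ (α k - 1) :=
    (measurable_const.div (by fun_prop)).aestronglyMeasurable
  have hfi := hf.eventually_intervalIntegrable_nhdsGT hfm hg hgi
  refine (hf.integral_nhdsGT hg hfi hgi).congr_right (.of_forall fun u => ?_)
  dsimp only
  rw [intervalIntegral.integral_const_mul, integral_rpow (Or.inl (by linarith)),
    show 1 - α j + 1 = 2 - α j by ring, Real.zero_rpow (by linarith), sub_zero, div_mul_div_comm,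
    mul_div_right_comm]

theorem stmt_11_general (b : ℝ) (hb : 0 < b) (n : ℕ)
    (η α : Fin (n+1) → ℝ) (hη : ∀ k, 0 < η k)
    (hanti : StrictAnti α)
    (hαg : α (Fin.last n) ∈ Set.Ioo (1:ℝ) 2) :
    Filter.Tendsto
      (fun u => (1 - Real.exp (-(∫ l in (0:ℝ)..u, b / (∑ k, η k * l ^ (α k - 1))))) /
        ((b / (η (Fin.last n) * (2 - α (Fin.last n)))) * u ^ (2 - α (Fin.last n))))
      (nhdsWithin 0 (Set.Ioi 0)) (nhds 1) := by
  set c := b / (η (Fin.last n) * (2 - α (Fin.last n)))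
  have hc : 0 < c := div_pos hb (mul_pos (hη _) (sub_pos.2 hαg.2))
  have hI := isEquivalent_integral_div_sum_rpow_nhdsGT_zero hb.le (hη _) hαg.2
    fun k hk => hanti (Fin.lt_last_iff_ne_last.2 hk)
  have hI0 : Tendsto (fun u => ∫ l in (0:ℝ)..u, b / ∑ k, η k * l ^ (α k - 1))
      (𝓝[>] 0) (𝓝 0) :=
    hI.symm.tendsto_nhds <| by
      simpa using ((tendsto_nhdsWithin_of_tendsto_nhds tendsto_id).rpow_const_nhds_zero
        (sub_pos.2 hαg.2)).const_mul c
  refine (isEquivalent_iff_tendsto_one ?_).1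
    ((isEquivalent_one_sub_exp_neg.comp_tendsto hI0).trans hI)
  filter_upwards [self_mem_nhdsWithin] with u hu
  exact (mul_pos hc (Real.rpow_pos_of_pos hu _)).ne'

/-- asymptotics at zero of 1 − exp(−∫₀^u b/(Σ η_k λ^{α_k−1}) dλ):
it is equivalent to (b/(η_g(2−α_g))) u^{2−α_g} as u → 0+. The g = n+1 components
are indexed by Fin (n+1), the exponents being strictly decreasing with α_0 ≤ 2
(so 2 ≥ α_1 > ... > α_g) and the last exponent α_{Fin.last n} ∈ (1,2). -/
theorem stmt_11 (b : ℝ) (hb : 0 < b) (n : ℕ)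
    (η α : Fin (n+1) → ℝ) (hη : ∀ k, 0 < η k)
    (hanti : StrictAnti α) (hα1 : α 0 ≤ 2)
    (hαg : α (Fin.last n) ∈ Set.Ioo (1:ℝ) 2) :
    Filter.Tendsto
      (fun u => (1 - Real.exp (-(∫ l in (0:ℝ)..u, b / (∑ k, η k * l ^ (α k - 1))))) /
        ((b / (η (Fin.last n) * (2 - α (Fin.last n)))) * u ^ (2 - α (Fin.last n))))
      (nhdsWithin 0 (Set.Ioi 0)) (nhds 1) :=
  stmt_11_general b hb n η α hη hanti hαg
end

section
/- Let a ∈ ℝ, let g ≥ 1 be an integer, let η_1,…,η_g > 0 and let α_1,…,α_g ∈ (1,2] be pairwise distinct, and define 𝓡(λ) := aλ − Σ_{k=1}^g η_k λ^{α_k} for λ ≥ 0. Then λ₀ := inf{λ > 0 : 1 + 𝓡(λ) = 0} is a finite positive real number, 1 + 𝓡(λ₀) = 0, 𝓡'(λ₀) < 0, 1 + 𝓡(y) > 0 for all y ∈ [0, λ₀), and the function 𝓖(x) := ∫₀^x 1/(1 + 𝓡(y)) dy is strictly increasing on [0, λ₀) with lim_{x→λ₀−} 𝓖(x) = +∞.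 -/
/-!
Write `f = 1 + 𝓡`. Since `f 0 = 1` and the term `-η_k λ^{α_k}` with `α_k > 1` drives `f` to
`-∞`, the zero set of `f` in `(0, ∞)` is nonempty and closed, so `λ₀` is its least element and
`f > 0` on `[0, λ₀)` by the intermediate value theorem. The Euler-type identity
`λ 𝓡'(λ) - 𝓡(λ) = -∑ η_k (α_k - 1) λ^{α_k} < 0` at `λ₀`, where `𝓡(λ₀) = -1`, gives
`λ₀ 𝓡'(λ₀) < -1`. Finally `f` is differentiable at its zero `λ₀`, so `f(y) ≤ C (λ₀ - y)` just
left of `λ₀`, and `𝓖` dominates `-C⁻¹ log (λ₀ - x)`.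
-/

open Real Set Filter intervalIntegral Topology

section FirstZero

variable {f : ℝ → ℝ}

theorem bddBelow_pos_zeros : BddBelow {l : ℝ | 0 < l ∧ f l = 0} := ⟨0, fun _ h => h.1.le⟩

theorem pos_of_mem_Ico_sInf_pos_zeros (hf : Continuous f) (h0 : 0 < f 0) :
    ∀ y ∈ Ico 0 (sInf {l | 0 < l ∧ f l = 0}), 0 < f y := by
  intro y ⟨hy0, hylt⟩
  by_contra! hfy
  obtain ⟨c, ⟨hc0, hcy⟩, hfc⟩ := intermediate_value_Icc' hy0 hf.continuousOn ⟨hfy, h0.le⟩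
  have hc : 0 < c := hc0.lt_of_ne (by rintro rfl; exact h0.ne' hfc)
  exact (csInf_le bddBelow_pos_zeros ⟨hc, hfc⟩).not_gt (hcy.trans_lt hylt)

theorem sInf_pos_zeros_mem (hf : Continuous f) (h0 : 0 < f 0) {L : ℝ} (hL : 0 ≤ L)
    (hfL : f L ≤ 0) : sInf {l | 0 < l ∧ f l = 0} ∈ {l | 0 < l ∧ f l = 0} := by
  set S := {l | 0 < l ∧ f l = 0}
  have hS : S = Ici 0 ∩ f ⁻¹' {0} := by
    ext l
    refine ⟨fun h => ⟨h.1.le, h.2⟩, fun ⟨hl, hfl⟩ => ⟨hl.lt_of_ne ?_, hfl⟩⟩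
    rintro rfl
    exact h0.ne' hfl
  have hne : S.Nonempty := by
    obtain ⟨c, ⟨hc0, -⟩, hfc⟩ := intermediate_value_Icc' hL hf.continuousOn ⟨hfL, h0.le⟩
    exact ⟨c, hS ▸ ⟨hc0, hfc⟩⟩
  have hclosed : IsClosed S := hS ▸ isClosed_Ici.inter (isClosed_singleton.preimage hf)
  exact hclosed.csInf_mem hne bddBelow_pos_zeros

end FirstZero

theorem tendsto_mul_sub_mul_rpow_atBot (a : ℝ) {η α : ℝ} (hη : 0 < η) (hα : 1 < α) :
    Tendsto (fun l => a * l - η * l ^ α) atTop atBot := by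
  have hlim : Tendsto (fun l : ℝ => a - η * l ^ (α - 1)) atTop atBot := by
    simpa [sub_eq_add_neg] using tendsto_atBot_add_const_left _ a
      (tendsto_neg_atTop_atBot.comp ((tendsto_rpow_atTop (sub_pos.2 hα)).const_mul_atTop hη))
  refine (tendsto_id.atTop_mul_atBot₀ hlim).congr' ?_
  filter_upwards [eventually_gt_atTop 0] with l hl
  rw [id, rpow_sub_one hl.ne']
  field_simp

noncomputable def branchingMechanism {ι : Type*} [Fintype ι] (a : ℝ) (η α : ι → ℝ) (l : ℝ) :
    ℝ :=
  a * l - ∑ k, η k * l ^ α k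

namespace branchingMechanism

variable {ι : Type*} [Fintype ι] (a : ℝ) {η α : ι → ℝ}

theorem continuous (hα : ∀ k, 0 ≤ α k) : Continuous (branchingMechanism a η α) :=
  (continuous_const.mul continuous_id).sub <|
    continuous_finsetSum _ fun k _ => continuous_const.mul (continuous_rpow_const (hα k))

theorem apply_zero (hα : ∀ k, α k ≠ 0) : branchingMechanism a η α 0 = 0 := by
  simp [branchingMechanism, zero_rpow, hα]

theorem hasDerivAt {l : ℝ} (hl : l ≠ 0) :
    HasDerivAt (branchingMechanism a η α) (a - ∑ k, η k * (α k * l ^ (α k - 1))) l :=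
  (by simpa using (hasDerivAt_id l).const_mul a : HasDerivAt (a * ·) a l).sub
    (HasDerivAt.fun_sum fun k _ => (hasDerivAt_rpow_const (Or.inl hl)).const_mul (η k))

theorem le_mul_sub_mul_rpow (hη : ∀ k, 0 ≤ η k) {l : ℝ} (hl : 0 ≤ l) (k : ι) :
    branchingMechanism a η α l ≤ a * l - η k * l ^ α k := by
  have := Finset.single_le_sum (fun k _ => mul_nonneg (hη k) (rpow_nonneg hl (α k)))
    (Finset.mem_univ k)
  unfold branchingMechanism
  linarith

theorem tendsto_atBot [hι : Nonempty ι] (hη : ∀ k, 0 < η k) (hα : ∀ k, 1 < α k) :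
    Tendsto (branchingMechanism a η α) atTop atBot := by
  obtain ⟨k⟩ := hι
  refine tendsto_atBot_mono' _ ?_ (tendsto_mul_sub_mul_rpow_atBot a (hη k) (hα k))
  filter_upwards [eventually_ge_atTop 0] with l hl
  exact le_mul_sub_mul_rpow a (fun k => (hη k).le) hl k

theorem mul_deriv_lt [Nonempty ι] (hη : ∀ k, 0 < η k) (hα : ∀ k, 1 < α k) {l : ℝ}
    (hl : 0 < l) : l * deriv (branchingMechanism a η α) l < branchingMechanism a η α l := by
  have hsum : ∑ k, η k * l ^ α k < ∑ k, l * (η k * (α k * l ^ (α k - 1))) := by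
    refine Finset.sum_lt_sum_of_nonempty Finset.univ_nonempty fun k _ => ?_
    have hterm : l * (η k * (α k * l ^ (α k - 1))) = α k * (η k * l ^ α k) := by
      rw [rpow_sub_one hl.ne']
      field_simp
    rw [hterm]
    exact lt_mul_of_one_lt_left (mul_pos (hη k) (rpow_pos_of_pos hl _)) (hα k)
  rw [(hasDerivAt a hl.ne').deriv, branchingMechanism, mul_sub, Finset.mul_sum]
  linarith [mul_comm l a]

end branchingMechanism

theorem strictMonoOn_integral_of_pos {f : ℝ → ℝ} {s : Set ℝ} {c : ℝ} (hs : s.OrdConnected)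
    (hc : c ∈ s) (hf : ContinuousOn f s) (hpos : ∀ y ∈ s, 0 < f y) :
    StrictMonoOn (fun x => ∫ y in c..x, f y) s := by
  have hint : ∀ u ∈ s, ∀ v ∈ s, IntervalIntegrable f MeasureTheory.volume u v :=
    fun u hu v hv => (hf.mono (hs.uIcc_subset hu hv)).intervalIntegrable
  intro x hx x' hx' hlt
  have hpos_int : 0 < ∫ y in x..x', f y := intervalIntegral_pos_of_pos_on (hint x hx x' hx')
    (fun y hy => hpos y (hs.out hx hx' (Ioo_subset_Icc_self hy))) hlt
  show ∫ y in c..x, f y < ∫ y in c..x', f y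
  rw [← integral_add_adjacent_intervals (hint c hc x hx) (hint x hx x' hx')]
  linarith

theorem integral_one_div_const_sub {b u x : ℝ} (hu : u < b) (hx : x < b) :
    ∫ y in u..x, 1 / (b - y) = log (b - u) - log (b - x) := by
  rw [integral_comp_sub_left (fun y => 1 / y), integral_one_div_of_pos (by linarith) (by linarith),
    log_div (by linarith) (by linarith)]

theorem tendsto_log_const_sub_nhdsLT (b : ℝ) :
    Tendsto (fun x => log (b - x)) (𝓝[<] b) atBot := by
  refine tendsto_log_nhdsGT_zero.comp ?_
  have hmaps : MapsTo (b - ·) (Iio b) (Ioi 0) := fun _ hx => mem_Ioi.2 (sub_pos.2 hx)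
  simpa using (continuous_sub_left b).continuousWithinAt.tendsto_nhdsWithin (x := b) hmaps

theorem HasDerivAt.exists_pos_eventually_sub_le {f : ℝ → ℝ} {f' b : ℝ}
    (hf : HasDerivAt f f' b) : ∃ C > 0, ∀ᶠ y in 𝓝[<] b, f y - f b ≤ C * (b - y) := by
  obtain ⟨C, hC, hCbound⟩ := hf.isBigO_sub.exists_pos
  refine ⟨C, hC, ?_⟩
  filter_upwards [nhdsWithin_le_nhds hCbound.bound, self_mem_nhdsWithin] with y hy hyb
  rw [norm_eq_abs, norm_eq_abs, abs_sub_comm y, abs_of_pos (sub_pos.2 hyb : 0 < b - y)] at hy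
  exact (le_abs_self _).trans hy

theorem tendsto_integral_one_div_atTop_of_hasDerivAt {f : ℝ → ℝ} {f' c b : ℝ} (hcb : c < b)
    (hf : ContinuousOn f (Ico c b)) (hpos : ∀ y ∈ Ico c b, 0 < f y) (hfb : f b = 0)
    (hderiv : HasDerivAt f f' b) :
    Tendsto (fun x => ∫ y in c..x, 1 / f y) (𝓝[<] b) atTop := by
  obtain ⟨C, hC, hCbound⟩ := hderiv.exists_pos_eventually_sub_le
  obtain ⟨l, hlb, hl⟩ := mem_nhdsLT_iff_exists_Ico_subset.1 hCbound
  set u := max c l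
  have hu : u ∈ Ico c b := ⟨le_max_left c l, max_lt hcb hlb⟩
  have hint : ∀ v ∈ Ico c b, ∀ w ∈ Ico c b,
      IntervalIntegrable (fun y => 1 / f y) MeasureTheory.volume v w := fun v hv w hw =>
    intervalIntegrable_one_div (fun y hy => (hpos y (ordConnected_Ico.uIcc_subset hv hw hy)).ne')
      (hf.mono (ordConnected_Ico.uIcc_subset hv hw))
  have hlower : ∀ x ∈ Ioo u b,
      (∫ y in c..u, 1 / f y) + C⁻¹ * (log (b - u) - log (b - x)) ≤ ∫ y in c..x, 1 / f y := by
    intro x hx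
    have hxmem : x ∈ Ico c b := ⟨hu.1.trans hx.1.le, hx.2⟩
    have hcmp : ∫ y in u..x, C⁻¹ * (1 / (b - y)) ≤ ∫ y in u..x, 1 / f y := by
      refine integral_mono_on hx.1.le ?_ (hint u hu x hxmem) fun y hy => ?_
      · refine (intervalIntegrable_one_div (fun y hy => ?_)
          (continuousOn_const.sub continuousOn_id)).const_mul C⁻¹
        rw [uIcc_of_le hx.1.le] at hy
        exact (sub_pos.2 (hy.2.trans_lt hx.2)).ne'
      · have hyb : y ∈ Ico l b := ⟨(le_max_right c l).trans hy.1, hy.2.trans_lt hx.2⟩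
        have hfy : 0 < f y := hpos y ⟨hu.1.trans hy.1, hyb.2⟩
        have hle : f y ≤ C * (b - y) := by simpa [hfb] using hl hyb
        calc C⁻¹ * (1 / (b - y)) = 1 / (C * (b - y)) := by simp only [one_div, mul_inv]
          _ ≤ 1 / f y := one_div_le_one_div_of_le hfy hle
    rw [integral_const_mul, integral_one_div_const_sub hu.2 hx.2] at hcmp
    rw [← integral_add_adjacent_intervals (hint c (left_mem_Ico.2 hcb) u hu) (hint u hu x hxmem)]
    linarith
  have hlog : Tendsto (fun x => log (b - u) - log (b - x)) (𝓝[<] b) atTop := by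
    simpa [sub_eq_add_neg] using tendsto_atTop_add_const_left _ (log (b - u))
      (tendsto_neg_atBot_atTop.comp (tendsto_log_const_sub_nhdsLT b))
  refine tendsto_atTop_mono' _ ?_
    (tendsto_atTop_add_const_left _ (∫ y in c..u, 1 / f y) (hlog.const_mul_atTop (inv_pos.2 hC)))
  filter_upwards [Ioo_mem_nhdsLT hu.2] with x hx using hlower x hx

theorem stmt_13_general (a : ℝ) (g : ℕ) (hg : 1 ≤ g)
    (η α : Fin g → ℝ) (hη : ∀ k, 0 < η k) (hα : ∀ k, α k ∈ Set.Ioc (1:ℝ) 2)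
    (R : ℝ → ℝ) (hR : ∀ l, R l = a * l - ∑ k, η k * l ^ α k)
    (lam0 : ℝ) (hlam0 : lam0 = sInf {l : ℝ | 0 < l ∧ 1 + R l = 0})
    (Gf : ℝ → ℝ) (hGf : ∀ x, Gf x = ∫ y in (0:ℝ)..x, 1 / (1 + R y)) :
    0 < lam0 ∧
    1 + R lam0 = 0 ∧
    deriv R lam0 < 0 ∧
    (∀ y ∈ Set.Ico (0:ℝ) lam0, 0 < 1 + R y) ∧
    StrictMonoOn Gf (Set.Ico 0 lam0) ∧
    Filter.Tendsto Gf (nhdsWithin lam0 (Set.Iio lam0)) Filter.atTop := by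
  have : Nonempty (Fin g) := ⟨⟨0, hg⟩⟩
  have hα1 : ∀ k, 1 < α k := fun k => (hα k).1
  obtain rfl : R = branchingMechanism a η α := funext hR
  obtain rfl : Gf = fun x => ∫ y in (0:ℝ)..x, 1 / (1 + branchingMechanism a η α y) := funext hGf
  subst hlam0
  set f := fun l => 1 + branchingMechanism a η α l
  have hf : Continuous f :=
    continuous_const.add (branchingMechanism.continuous a fun k => (zero_lt_one.trans (hα1 k)).le)
  have hf0 : 0 < f 0 := by
    simp [f, branchingMechanism.apply_zero a fun k => (zero_lt_one.trans (hα1 k)).ne']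
  obtain ⟨L, hL, hfL⟩ : ∃ L, 0 ≤ L ∧ f L ≤ 0 :=
    ((eventually_ge_atTop 0).and ((tendsto_atBot_add_const_left _ 1
      (branchingMechanism.tendsto_atBot a hη hα1)).eventually (eventually_le_atBot 0))).exists
  obtain ⟨hpos, hroot⟩ := sInf_pos_zeros_mem hf hf0 hL hfL
  have hposOn := pos_of_mem_Ico_sInf_pos_zeros hf hf0
  refine ⟨hpos, hroot, ?_, hposOn, ?_, ?_⟩
  · have := branchingMechanism.mul_deriv_lt a hη hα1 hpos
    exact neg_of_mul_neg_right (by linarith) hpos.le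
  · exact strictMonoOn_integral_of_pos ordConnected_Ico (left_mem_Ico.2 hpos)
      (continuousOn_const.div hf.continuousOn fun y hy => (hposOn y hy).ne')
      fun y hy => one_div_pos.2 (hposOn y hy)
  · exact tendsto_integral_one_div_atTop_of_hasDerivAt hpos hf.continuousOn hposOn hroot
      ((branchingMechanism.hasDerivAt a hpos.ne').const_add 1)

/-- properties of the branching mechanism 𝓡(λ) = aλ − Σ η_k λ^{α_k}:
λ₀ = inf{λ > 0 : 1 + 𝓡(λ) = 0} is positive, 1 + 𝓡(λ₀) = 0, 𝓡'(λ₀) < 0,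
1 + 𝓡 > 0 on [0, λ₀), and 𝓖(x) = ∫₀^x 1/(1+𝓡(y)) dy is strictly increasing on
[0, λ₀) with 𝓖(x) → +∞ as x → λ₀−. -/
theorem stmt_13 (a : ℝ) (g : ℕ) (hg : 1 ≤ g)
    (η α : Fin g → ℝ) (hη : ∀ k, 0 < η k) (hα : ∀ k, α k ∈ Set.Ioc (1:ℝ) 2)
    (hinj : Function.Injective α)
    (R : ℝ → ℝ) (hR : ∀ l, R l = a * l - ∑ k, η k * l ^ α k)
    (lam0 : ℝ) (hlam0 : lam0 = sInf {l : ℝ | 0 < l ∧ 1 + R l = 0})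
    (Gf : ℝ → ℝ) (hGf : ∀ x, Gf x = ∫ y in (0:ℝ)..x, 1 / (1 + R y)) :
    0 < lam0 ∧
    1 + R lam0 = 0 ∧
    deriv R lam0 < 0 ∧
    (∀ y ∈ Set.Ico (0:ℝ) lam0, 0 < 1 + R y) ∧
    StrictMonoOn Gf (Set.Ico 0 lam0) ∧
    Filter.Tendsto Gf (nhdsWithin lam0 (Set.Iio lam0)) Filter.atTop :=
  stmt_13_general a g hg η α hη hα R hR lam0 hlam0 Gf hGf
end

section
/- Let 2 ≥ α₁ > α₂ > 1 and let c₁, c₂, d₁, d₂, η₁, η₂ > 0. Then there do not exist functions G_1, G_2 : [0,∞) → [0,∞) such that for all x ≥ 0 both c₁ G_1(x)^{α₁} + d₁ G_2(x)^{α₁} = η₁ x and c₂ G_1(x)^{α₂} + d₂ G_2(x)^{α₂} = η₂ x hold. -/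
open Real Filter

/-! For every solution, the first equation bounds each `Gᵢ(x)^α₁` by `O(x)`, hence each
`Gᵢ(x)^α₂` by `O(x^β)` with `β = α₂/α₁ < 1`. The second equation then says that `η₂ x` is
`O(x^β)`, which fails for large `x`. -/

lemma rpow_le_div_rpow_mul_rpow_of_mul_rpow_le {g c η x p q : ℝ} (hg : 0 ≤ g) (hc : 0 < c)
    (hη : 0 ≤ η) (hx : 0 ≤ x) (hp : 0 < p) (hq : 0 ≤ q) (h : c * g ^ p ≤ η * x) :
    g ^ q ≤ (η / c) ^ (q / p) * x ^ (q / p) := by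
  have hgp : g ^ p ≤ η / c * x := by rwa [div_mul_eq_mul_div, le_div_iff₀' hc]
  calc g ^ q = (g ^ p) ^ (q / p) := by rw [← rpow_mul hg, mul_div_cancel₀ q hp.ne']
    _ ≤ (η / c * x) ^ (q / p) := rpow_le_rpow (rpow_nonneg hg p) hgp (div_nonneg hq hp.le)
    _ = (η / c) ^ (q / p) * x ^ (q / p) := mul_rpow (div_nonneg hη hc.le) hx

lemma exists_mul_rpow_lt_mul {a β : ℝ} (C : ℝ) (ha : 0 < a) (hβ : β < 1) :
    ∃ x > 0, C * x ^ β < a * x := by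
  obtain ⟨x, hx, hlarge⟩ := ((eventually_gt_atTop 0).and
    ((tendsto_rpow_atTop (sub_pos.2 hβ)).eventually_gt_atTop (C / a))).exists
  refine ⟨x, hx, ?_⟩
  calc C * x ^ β < a * x ^ (1 - β) * x ^ β :=
        mul_lt_mul_of_pos_right ((div_lt_iff₀' ha).1 hlarge) (rpow_pos_of_pos hx β)
    _ = a * x := by rw [mul_assoc, ← rpow_add hx, sub_add_cancel, rpow_one]

theorem stmt_15_general (α₁ α₂ c₁ c₂ d₁ d₂ η₁ η₂ : ℝ)
    (h12 : α₂ < α₁) (hα₂ : 1 < α₂)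
    (hc₁ : 0 < c₁) (hc₂ : 0 < c₂) (hd₁ : 0 < d₁) (hd₂ : 0 < d₂)
    (hη₁ : 0 < η₁) (hη₂ : 0 < η₂) :
    ¬ ∃ G₁ G₂ : ℝ → ℝ,
      (∀ x ≥ (0:ℝ), 0 ≤ G₁ x ∧ 0 ≤ G₂ x) ∧
      (∀ x ≥ (0:ℝ),
        c₁ * G₁ x ^ α₁ + d₁ * G₂ x ^ α₁ = η₁ * x ∧
        c₂ * G₁ x ^ α₂ + d₂ * G₂ x ^ α₂ = η₂ * x) := by
  rintro ⟨G₁, G₂, hnn, heq⟩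
  have hα₂0 : 0 < α₂ := by linarith
  have hα₁0 : 0 < α₁ := by linarith
  set β := α₂ / α₁
  obtain ⟨x, hx, hlt⟩ := exists_mul_rpow_lt_mul (c₂ * (η₁ / c₁) ^ β + d₂ * (η₁ / d₁) ^ β) hη₂
    ((div_lt_one hα₁0).2 h12)
  obtain ⟨hG₁, hG₂⟩ := hnn x hx.le
  obtain ⟨heq₁, heq₂⟩ := heq x hx.le
  have hb₁ : G₁ x ^ α₂ ≤ (η₁ / c₁) ^ β * x ^ β :=
    rpow_le_div_rpow_mul_rpow_of_mul_rpow_le hG₁ hc₁ hη₁.le hx.le hα₁0 hα₂0.le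
      (by linarith [mul_nonneg hd₁.le (rpow_nonneg hG₂ α₁)])
  have hb₂ : G₂ x ^ α₂ ≤ (η₁ / d₁) ^ β * x ^ β :=
    rpow_le_div_rpow_mul_rpow_of_mul_rpow_le hG₂ hd₁ hη₁.le hx.le hα₁0 hα₂0.le
      (by linarith [mul_nonneg hc₁.le (rpow_nonneg hG₁ α₁)])
  linarith [mul_le_mul_of_nonneg_left hb₁ hc₂.le, mul_le_mul_of_nonneg_left hb₂ hd₂.le]

/-- with 2 ≥ α₁ > α₂ > 1 and all coefficients positive, there are no
nonnegative functions G₁, G₂ on [0,∞) satisfying simultaneously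
c₁G₁(x)^{α₁} + d₁G₂(x)^{α₁} = η₁x and c₂G₁(x)^{α₂} + d₂G₂(x)^{α₂} = η₂x for all x ≥ 0. -/
theorem stmt_15 (α₁ α₂ c₁ c₂ d₁ d₂ η₁ η₂ : ℝ)
    (hα₁ : α₁ ≤ 2) (h12 : α₂ < α₁) (hα₂ : 1 < α₂)
    (hc₁ : 0 < c₁) (hc₂ : 0 < c₂) (hd₁ : 0 < d₁) (hd₂ : 0 < d₂)
    (hη₁ : 0 < η₁) (hη₂ : 0 < η₂) :
    ¬ ∃ G₁ G₂ : ℝ → ℝ,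
      (∀ x ≥ (0:ℝ), 0 ≤ G₁ x ∧ 0 ≤ G₂ x) ∧
      (∀ x ≥ (0:ℝ),
        c₁ * G₁ x ^ α₁ + d₁ * G₂ x ^ α₁ = η₁ * x ∧
        c₂ * G₁ x ^ α₂ + d₂ * G₂ x ^ α₂ = η₂ * x) :=
  stmt_15_general α₁ α₂ c₁ c₂ d₁ d₂ η₁ η₂ h12 hα₂ hc₁ hc₂ hd₁ hd₂ hη₁ hη₂
end

section
/- Let a, b, c, d > 0 and 2 ≥ α₁ > α₂ > 1. Then there exists X > 0 such that for all x ≥ X and all y ∈ [0, min((b x / c)^{1/α₁}, (a x / d)^{1/α₂})] one has (b x − c y^{α₁})^{1/α₁} < (a x − d y^{α₂})^{1/α₂}. -/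
/-!
On the admissible range of `y` the left side is at most `(b x)^{1/α₁}`, while
`d y^{α₂} ≤ d (b x / c)^{α₂/α₁} = o(x)` because `α₂ / α₁ < 1`, so for large `x` the right side is
at least `(a x / 2)^{1/α₂}`. Since `1/α₁ < 1/α₂`, eventually `(b x)^{1/α₁} < (a x / 2)^{1/α₂}`.
-/

open Real Filter

lemma eventually_mul_rpow_lt_mul_rpow {p q A : ℝ} (hpq : p < q) (hA : 0 < A) (B : ℝ) :
    ∀ᶠ x in atTop, B * x ^ p < A * x ^ q := by
  filter_upwards [(tendsto_rpow_atTop (sub_pos.2 hpq)).eventually_gt_atTop (B / A),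
    eventually_gt_atTop 0] with x hx hx0
  rw [div_lt_iff₀ hA] at hx
  calc B * x ^ p < x ^ (q - p) * A * x ^ p := by gcongr
    _ = A * x ^ q := by rw [mul_right_comm, ← rpow_add hx0, sub_add_cancel, mul_comm]

lemma eventually_rpow_mul_lt_rpow_mul {p q a b : ℝ} (hpq : p < q) (ha : 0 < a) (hb : 0 ≤ b) :
    ∀ᶠ x in atTop, (b * x) ^ p < (a * x) ^ q := by
  filter_upwards [eventually_mul_rpow_lt_mul_rpow hpq (rpow_pos_of_pos ha q) (b ^ p),
    eventually_ge_atTop 0] with x hx hx0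
  rwa [mul_rpow hb hx0, mul_rpow ha.le hx0]

lemma rpow_sub_lt_rpow_sub {α₁ α₂ c d u w y : ℝ} (hα₁ : 0 < α₁) (hα₂ : 0 < α₂)
    (hc : 0 < c) (hd : 0 ≤ d) (hu : 0 ≤ u) (hy : 0 ≤ y) (hyu : y ≤ (u / c) ^ (1 / α₁))
    (hgap : u ^ (1 / α₁) < (w / 2) ^ (1 / α₂)) (hsmall : d * (u / c) ^ (α₂ / α₁) ≤ w / 2) :
    (u - c * y ^ α₁) ^ (1 / α₁) < (w - d * y ^ α₂) ^ (1 / α₂) := by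
  have hyα₁ : c * y ^ α₁ ≤ u := by
    rwa [one_div, le_rpow_inv_iff_of_pos hy (by positivity) hα₁, le_div_iff₀' hc] at hyu
  have hyα₂ : y ^ α₂ ≤ (u / c) ^ (α₂ / α₁) := calc
    y ^ α₂ = (y ^ α₁) ^ (α₂ / α₁) := by rw [← rpow_mul hy, mul_div_cancel₀ _ hα₁.ne']
    _ ≤ (u / c) ^ (α₂ / α₁) := by gcongr; rwa [le_div_iff₀' hc]
  have hw : 0 ≤ w / 2 := le_trans (by positivity) hsmall
  calc (u - c * y ^ α₁) ^ (1 / α₁) ≤ u ^ (1 / α₁) := by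
        gcongr
        exact sub_le_self _ (by positivity)
    _ < (w / 2) ^ (1 / α₂) := hgap
    _ ≤ (w - d * y ^ α₂) ^ (1 / α₂) := by
        gcongr
        nlinarith [mul_le_mul_of_nonneg_left hyα₂ hd]

theorem stmt_17_general (a b c d α₁ α₂ : ℝ) (ha : 0 < a) (hb : 0 < b) (hc : 0 < c) (hd : 0 < d)
    (h12 : α₂ < α₁) (hα₂ : 1 < α₂) :
    ∃ X > (0:ℝ), ∀ x ≥ X,
      ∀ y ∈ Set.Icc (0:ℝ) (min ((b*x/c)^(1/α₁)) ((a*x/d)^(1/α₂))),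
        (b*x - c*y^α₁)^(1/α₁) < (a*x - d*y^α₂)^(1/α₂) := by
  have hα₂0 : 0 < α₂ := by linarith
  have hα₁0 : 0 < α₁ := hα₂0.trans h12
  have hgap := eventually_rpow_mul_lt_rpow_mul (one_div_lt_one_div_of_lt hα₂0 h12)
    (half_pos ha) hb.le
  have hsmall := eventually_rpow_mul_lt_rpow_mul (q := 1) ((div_lt_one hα₁0).2 h12)
    (by positivity : 0 < a / (2 * d)) (div_pos hb hc).le
  obtain ⟨X, hX⟩ := eventually_atTop.1 ((hgap.and hsmall).and (eventually_ge_atTop 0))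
  refine ⟨max X 1, by positivity, fun x hx y hy => ?_⟩
  obtain ⟨⟨hgapx, hsmallx⟩, hx0⟩ := hX x (le_of_max_le_left hx)
  refine rpow_sub_lt_rpow_sub hα₁0 hα₂0 hc hd.le (by positivity) hy.1
    (hy.2.trans (min_le_left _ _)) (by rwa [div_mul_eq_mul_div] at hgapx) ?_
  calc d * (b * x / c) ^ (α₂ / α₁) ≤ d * (a / (2 * d) * x) := by
        rw [← div_mul_eq_mul_div, ← rpow_one (a / (2 * d) * x)]; gcongr
    _ = a * x / 2 := by field_simp

/-- for a,b,c,d > 0 and 2 ≥ α₁ > α₂ > 1, for all sufficiently large x and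
all y ∈ [0, min((bx/c)^{1/α₁}, (ax/d)^{1/α₂})]:
(bx − cy^{α₁})^{1/α₁} < (ax − dy^{α₂})^{1/α₂}. -/
theorem stmt_17 (a b c d α₁ α₂ : ℝ) (ha : 0 < a) (hb : 0 < b) (hc : 0 < c) (hd : 0 < d)
    (hα₁ : α₁ ≤ 2) (h12 : α₂ < α₁) (hα₂ : 1 < α₂) :
    ∃ X > (0:ℝ), ∀ x ≥ X,
      ∀ y ∈ Set.Icc (0:ℝ) (min ((b*x/c)^(1/α₁)) ((a*x/d)^(1/α₂))),
        (b*x - c*y^α₁)^(1/α₁) < (a*x - d*y^α₂)^(1/α₂) :=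
  stmt_17_general a b c d α₁ α₂ ha hb hc hd h12 hα₂
end
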